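/- arXiv:1511.05945 — 6 statements merged into one kernel-verified Lean document; each statement's English description precedes it below -/
import Mathlib

section
/- Let (ξ_n)_{n ∈ ℕ} be a bounded sequence in an inner product space H, and let (I_j) be a Følner sequence of finite subsets of ℕ^d. Then limsup over j of the squared norm of the average (1/|I_j|) Σ_{n ∈ I_j} ξ_n is at most 4 times limsup_{H→∞} (1/H^d) Σ_{h ∈ [H]^d} limsup_j |(1/|I_j|) Σ_{n ∈ I_j} ⟨ξ_{n+h}, ξ_n⟩|. -/
/-!
Choose an ultrafilter `U` along which `‖avg_{I j} ξ‖²` tends to its limsup. The `U`-limit of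
`avg_{n ∈ I j} ⟪v n, w n⟫` is a semi-inner product on bounded sequences, and the Følner property
makes every translation `S_k` an isometry for it. Let `B_M` average `S_t` over the box `[0, M)^d`
and `ν = inf_M ‖B_M ξ‖`; by the Følner property and Cauchy–Schwarz the limsup is at most `ν²`.

For the other bound take `K` with `‖B_K ξ‖ ≈ ν` and put `b = B_K ξ`, `u = B_H b`. Averages over
`[0, M)^d` with `M ≫ H + K` do not see translations of size `H + K`, so `B_M ((u + b) / 2) ≈ B_M ξ`
and hence `ν ≤ ‖(u + b) / 2‖`; with `‖u‖ ≤ ‖b‖ ≈ ν` this gives `ν² ≲ Re ⟪u, b⟫`. Since `B_H ξ`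
barely changes under translations of size `K ≪ H`, `⟪u, b⟫ ≈ ⟪B_H ξ, ξ⟫`, which is
`avg_{h ∈ [1, H]^d} ⟪S_h ξ, ξ⟫` up to `O(1/H)`, and each `‖⟪S_h ξ, ξ⟫‖` is at most the limsup
over `j` of the correlation averages.
-/

open Filter Finset Topology
open scoped InnerProductSpace symmDiff

namespace VanDerCorput

section Average

variable {ι κ W : Type*}

/-- Equal to `0` when `s` is empty. -/
noncomputable def avg [AddCommMonoid W] [Module ℝ W] (s : Finset ι) (f : ι → W) : W :=
  (#s : ℝ)⁻¹ • ∑ i ∈ s, f i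

section Module

variable [AddCommGroup W] [Module ℝ W] (s : Finset ι)

lemma avg_add (f g : ι → W) : avg s (fun i => f i + g i) = avg s f + avg s g := by
  simp only [avg, sum_add_distrib, smul_add]

lemma map_avg {W' F : Type*} [AddCommGroup W'] [Module ℝ W'] [FunLike F W W']
    [LinearMapClass F ℝ W W'] (g : F) (f : ι → W) : g (avg s f) = avg s fun i => g (f i) := by
  simp only [avg, map_smul, map_sum]

lemma smul_avg {R : Type*} [Monoid R] [DistribMulAction R W] [SMulCommClass ℝ R W] (c : R)
    (f : ι → W) : c • avg s f = avg s fun i => c • f i := by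
  simp only [avg, smul_sum]
  exact sum_congr rfl fun _ _ => (smul_comm _ _ _).symm

lemma avg_comm (t : Finset κ) (f : ι → κ → W) :
    avg s (fun i => avg t (f i)) = avg t fun k => avg s fun i => f i k := by
  simp only [avg, smul_sum]
  rw [sum_comm]
  simp only [smul_comm (#s : ℝ)⁻¹]

lemma avg_image [DecidableEq κ] {g : ι → κ} (hg : Set.InjOn g s) (f : κ → W) :
    avg (s.image g) f = avg s fun i => f (g i) := by
  simp only [avg, card_image_of_injOn hg, sum_image hg]

lemma avg_const (hs : s.Nonempty) (c : W) : avg s (fun _ => c) = c := by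
  rw [avg, sum_const, ← Nat.cast_smul_eq_nsmul ℝ, smul_smul,
    inv_mul_cancel₀ (by exact_mod_cast hs.card_pos.ne'), one_smul]

end Module

lemma card_symmDiff [DecidableEq ι] (s t : Finset ι) : #(s ∆ t) = #(s \ t) + #(t \ s) :=
  card_union_of_disjoint disjoint_sdiff_sdiff

lemma norm_sum_sub_sum_le [DecidableEq ι] [SeminormedAddCommGroup W] (s t : Finset ι)
    {f : ι → W} {C : ℝ} (hf : ∀ i, ‖f i‖ ≤ C) : ‖∑ i ∈ s, f i - ∑ i ∈ t, f i‖ ≤ C * #(s ∆ t) := by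
  have hsum : ∀ u : Finset ι, ‖∑ i ∈ u, f i‖ ≤ C * #u := fun u => by
    simpa [mul_comm] using norm_sum_le_of_le u fun i _ => hf i
  rw [← sum_sdiff_sub_sum_sdiff, card_symmDiff, Nat.cast_add, mul_add]
  exact (norm_sub_le _ _).trans (add_le_add (hsum _) (hsum _))

section Normed

variable [SeminormedAddCommGroup W] [NormedSpace ℝ W] (s : Finset ι)

lemma norm_avg_eq (f : ι → W) : ‖avg s f‖ = (#s : ℝ)⁻¹ * ‖∑ i ∈ s, f i‖ := by
  rw [avg, norm_smul, Real.norm_of_nonneg (by positivity)]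

lemma norm_avg_sub_le (hs : s.Nonempty) {f : ι → W} {e : W} {c : ℝ}
    (h : ∀ i ∈ s, ‖f i - e‖ ≤ c) : ‖avg s f - e‖ ≤ c := by
  have hmem := (convex_closedBall e c).sum_mem (t := s) (w := fun _ => (#s : ℝ)⁻¹) (z := f)
    (fun _ _ => by positivity) (by simp [hs.card_pos.ne'])
    (fun i hi => by simpa [dist_eq_norm] using h i hi)
  simpa [avg, smul_sum, dist_eq_norm] using hmem

lemma norm_avg_le {f : ι → W} {c : ℝ} (hc : 0 ≤ c) (h : ∀ i ∈ s, ‖f i‖ ≤ c) :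
    ‖avg s f‖ ≤ c := by
  rcases s.eq_empty_or_nonempty with rfl | hs
  · simpa [avg] using hc
  · simpa using norm_avg_sub_le s hs (f := f) (e := 0) (by simpa using h)

lemma norm_avg_sq_le (f : ι → W) : ‖avg s f‖ ^ 2 ≤ avg s fun i => ‖f i‖ ^ 2 := by
  rcases s.eq_empty_or_nonempty with rfl | hs
  · simp [avg]
  have hcard : (0 : ℝ) < #s := by exact_mod_cast hs.card_pos
  have hnorm : ‖avg s f‖ ≤ (#s : ℝ)⁻¹ * ∑ i ∈ s, ‖f i‖ := by
    rw [avg, norm_smul, Real.norm_of_nonneg (by positivity)]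
    exact mul_le_mul_of_nonneg_left (norm_sum_le _ _) (by positivity)
  calc ‖avg s f‖ ^ 2 ≤ ((#s : ℝ)⁻¹ * ∑ i ∈ s, ‖f i‖) ^ 2 := by gcongr
    _ ≤ (#s : ℝ)⁻¹ ^ 2 * (#s * ∑ i ∈ s, ‖f i‖ ^ 2) := by
      rw [mul_pow]; gcongr; exact sq_sum_le_card_mul_sum_sq
    _ = avg s fun i => ‖f i‖ ^ 2 := by rw [avg, smul_eq_mul]; field_simp

lemma norm_avg_add_sub_avg_le {α : Type*} [AddCancelCommMonoid α] [DecidableEq α]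
    (s : Finset α) {f : α → W} {C : ℝ} (hf : ∀ n, ‖f n‖ ≤ C) (k : α) :
    ‖avg s (fun n => f (n + k)) - avg s f‖ ≤ C * (#(s.image (· + k) ∆ s) / #s) := by
  have hinj : Set.InjOn (· + k) (s : Set α) := (add_left_injective k).injOn
  rw [← avg_image s hinj, avg, avg, card_image_of_injOn hinj, ← smul_sub, norm_smul,
    Real.norm_of_nonneg (by positivity), mul_div_assoc', div_eq_inv_mul]
  exact mul_le_mul_of_nonneg_left (norm_sum_sub_sum_le _ _ hf) (by positivity)

end Normed

section Real

variable (s : Finset ι) {f g : ι → ℝ}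

lemma avg_nonneg (h : ∀ i ∈ s, 0 ≤ f i) : 0 ≤ avg s f :=
  smul_nonneg (by positivity) (sum_nonneg h)

lemma avg_le_avg (h : ∀ i ∈ s, f i ≤ g i) : avg s f ≤ avg s g :=
  smul_le_smul_of_nonneg_left (sum_le_sum h) (by positivity)

lemma avg_le_of_le {c : ℝ} (hc : 0 ≤ c) (h : ∀ i ∈ s, f i ≤ c) : avg s f ≤ c := by
  rcases s.eq_empty_or_nonempty with rfl | hs
  · simpa [avg] using hc
  · simpa [avg_const s hs] using avg_le_avg s (g := fun _ => c) h

end Real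

end Average

section Folner

variable {α : Type*} [AddCommMonoid α] [DecidableEq α]

def IsFolnerAlong (I : ℕ → Finset α) (l : Filter ℕ) : Prop :=
  ∀ k : α, Tendsto (fun j => (#((I j).image (· + k) ∆ I j) : ℝ) / #(I j)) l (𝓝 0)

lemma IsFolnerAlong.mono {I : ℕ → Finset α} {l l' : Filter ℕ} (hI : IsFolnerAlong I l)
    (hl : l' ≤ l) : IsFolnerAlong I l' :=
  fun k => (hI k).mono_left hl

end Folner

lemma isFolnerAlong_of_int {d : ℕ} {I : ℕ → Finset (Fin d → ℕ)} {l : Filter ℕ}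
    (hI : ∀ k : Fin d → ℤ, Tendsto (fun j =>
      ((symmDiff ((I j).image fun n => fun i => (n i : ℤ) + k i)
        ((I j).image fun n => fun i => (n i : ℤ))).card : ℝ) / (I j).card) l (𝓝 0)) :
    IsFolnerAlong I l := by
  intro k
  let cast : (Fin d → ℕ) → (Fin d → ℤ) := fun n i => n i
  have hcast : Function.Injective cast := fun x y h => funext fun i => by
    simpa [cast] using congrFun h i
  refine (hI fun i => k i).congr fun j => ?_
  have himage : ((I j).image fun n i => (n i : ℤ) + k i) = ((I j).image (· + k)).image cast := by
    rw [image_image]; rfl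
  rw [himage, ← image_symmDiff _ _ hcast, card_image_of_injective _ hcast]

section Box

variable {d H : ℕ}

def box (d H : ℕ) : Finset (Fin d → ℕ) := Fintype.piFinset fun _ => range H

lemma mem_box {t : Fin d → ℕ} : t ∈ box d H ↔ ∀ i, t i < H := by
  simp [box]

lemma card_box : #(box d H) = H ^ d := by
  simp [box]

lemma box_nonempty (hH : 0 < H) : (box d H).Nonempty :=
  ⟨0, mem_box.2 fun _ => hH⟩

lemma sum_le_of_mem_box {t : Fin d → ℕ} (ht : t ∈ box d H) : ∑ i, (t i : ℝ) ≤ d * H := by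
  simpa using sum_le_sum fun i (_ : i ∈ univ) => (Nat.cast_le (α := ℝ)).2 (mem_box.1 ht i).le

lemma image_add_one_box : (box d H).image (· + 1) = Fintype.piFinset fun _ => Icc 1 H := by
  ext h
  simp only [mem_image, mem_box, Fintype.mem_piFinset, mem_Icc]
  constructor
  · rintro ⟨t, ht, rfl⟩ i
    simpa using ht i
  · intro hh
    refine ⟨fun i => h i - 1, fun i => ?_, funext fun i => ?_⟩
    · have := hh i
      show h i - 1 < H
      omega
    · have := hh i
      show h i - 1 + 1 = h i
      omega

lemma card_filter_box_mul_le (i : Fin d) (m : ℕ) :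
    #((box d H).filter fun t => t i < m) * H ≤ m * H ^ d := by
  have hsub : (box d H).filter (fun t => t i < m) ⊆
      Fintype.piFinset (Function.update (fun _ => range H) i (range m)) := by
    intro t ht
    simp only [mem_filter, mem_box] at ht
    simp only [Fintype.mem_piFinset]
    intro l
    rcases eq_or_ne l i with rfl | hl
    · simpa using ht.2
    · simpa [hl] using ht.1 l
  have hcard : #(Fintype.piFinset (Function.update (fun _ => range H) i (range m))) * H =
      m * H ^ d := by
    have hfactor : ∀ l, #(Function.update (fun _ => range H) i (range m) l) =
        Function.update (fun _ => H) i m l := fun l => by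
      rcases eq_or_ne l i with rfl | hl <;> simp [*]
    rw [Fintype.card_piFinset, prod_congr rfl fun l _ => hfactor l,
      prod_update_of_mem (mem_univ i), mul_assoc, sdiff_singleton_eq_erase,
      prod_erase_mul _ _ (mem_univ i)]
    simp
  exact hcard ▸ Nat.mul_le_mul_right H (card_le_card hsub)

lemma card_image_add_symmDiff_box_mul_le (a : Fin d → ℕ) :
    #((box d H).image (· + a) ∆ box d H) * H ≤ 2 * (∑ i, a i) * H ^ d := by
  have hcard : #((box d H).image (· + a)) = #(box d H) :=
    card_image_of_injective _ (add_left_injective a)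
  have hsub : box d H \ (box d H).image (· + a) ⊆
      univ.biUnion fun i => (box d H).filter fun t => t i < a i := by
    intro t ht
    simp only [Finset.mem_sdiff, mem_image, not_exists, not_and] at ht
    simp only [mem_biUnion, mem_univ, true_and, mem_filter]
    by_contra! hge
    refine ht.2 (t - a) (mem_box.2 fun i => ?_) ?_
    · exact (Nat.sub_le _ _).trans_lt (mem_box.1 ht.1 i)
    · exact funext fun i => Nat.sub_add_cancel (hge i ht.1)
  have hsdiff : #(box d H \ (box d H).image (· + a)) * H ≤ (∑ i, a i) * H ^ d :=
    calc #(box d H \ (box d H).image (· + a)) * H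
        ≤ (∑ i, #((box d H).filter fun t => t i < a i)) * H :=
          Nat.mul_le_mul_right H ((card_le_card hsub).trans card_biUnion_le)
      _ ≤ ∑ i, a i * H ^ d := by
          rw [sum_mul]; exact sum_le_sum fun i _ => card_filter_box_mul_le i (a i)
      _ = (∑ i, a i) * H ^ d := (sum_mul ..).symm
  rw [card_symmDiff, card_sdiff_comm hcard, ← two_mul, mul_assoc, mul_assoc]
  exact Nat.mul_le_mul_left 2 hsdiff

lemma norm_avg_box_add_sub_le {W : Type*} [SeminormedAddCommGroup W] [NormedSpace ℝ W]
    (hH : 0 < H) {f : (Fin d → ℕ) → W} {C : ℝ} (hf : ∀ n, ‖f n‖ ≤ C) (a : Fin d → ℕ) :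
    ‖avg (box d H) (fun t => f (t + a)) - avg (box d H) f‖ ≤ 2 * C * (∑ i, (a i : ℝ)) / H := by
  have hC : 0 ≤ C := (norm_nonneg _).trans (hf 0)
  have hH' : (0 : ℝ) < H := by exact_mod_cast hH
  have hcount : (#((box d H).image (· + a) ∆ box d H) : ℝ) / #(box d H) ≤
      2 * (∑ i, (a i : ℝ)) / H := by
    rw [card_box, Nat.cast_pow, div_le_div_iff₀ (by positivity) hH']
    exact_mod_cast card_image_add_symmDiff_box_mul_le a
  calc _ ≤ C * ((#((box d H).image (· + a) ∆ box d H) : ℝ) / #(box d H)) :=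
        norm_avg_add_sub_avg_le _ hf a
    _ ≤ C * (2 * (∑ i, (a i : ℝ)) / H) := by gcongr
    _ = 2 * C * (∑ i, (a i : ℝ)) / H := by ring

end Box

section Limsup

lemma le_limsup_of_le_add_div {g : ℕ → ℝ} {a c : ℝ} (hg : IsBoundedUnder (· ≤ ·) atTop g)
    (h : ∀ H : ℕ, 0 < H → a ≤ g H + c / H) : a ≤ limsup g atTop := by
  have ht : Tendsto (fun H : ℕ => a - c / H) atTop (𝓝 a) := by
    simpa using tendsto_const_nhds.sub (tendsto_const_div_atTop_nhds_zero_nat c)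
  rw [← ht.limsup_eq]
  exact limsup_le_limsup ((eventually_gt_atTop 0).mono fun H hH => by linarith [h H hH])
    ht.isCoboundedUnder_le hg

lemma le_limsup_of_tendsto_ultrafilter {f : ℕ → ℝ} {U : Ultrafilter ℕ} (hU : (U : Filter ℕ) ≤ atTop)
    {a : ℝ} (hf : Tendsto f U (𝓝 a)) (hbdd : IsBoundedUnder (· ≤ ·) atTop f) :
    a ≤ limsup f atTop :=
  hf.limsup_eq ▸ limsup_le_limsup_of_le hU hf.isCoboundedUnder_le hbdd

lemma limsup_le_of_forall_ultrafilter {A : ℕ → ℝ} {b : ℝ}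
    (hA : IsCoboundedUnder (· ≤ ·) atTop A)
    (h : ∀ U : Ultrafilter ℕ, (U : Filter ℕ) ≤ atTop → ∀ a, (∀ᶠ j in U, a ≤ A j) → a ≤ b) :
    limsup A atTop ≤ b := by
  refine le_of_forall_lt_imp_le_of_dense fun a ha => ?_
  have := frequently_iff_neBot.1 (frequently_lt_of_lt_limsup hA ha)
  obtain ⟨U, hU⟩ := exists_ultrafilter_le (atTop ⊓ 𝓟 {j | a < A j})
  have hev : ∀ᶠ j in (U : Filter ℕ), a < A j := le_principal_iff.1 (hU.trans inf_le_right)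
  exact h U (hU.trans inf_le_left) a (hev.mono fun _ hj => hj.le)

end Limsup

section InnerAvg

variable {ι F : Type*} [SeminormedAddCommGroup F] [InnerProductSpace ℂ F] (s : Finset ι)

lemma inner_avg_left (f : ι → F) (x : F) : ⟪avg s f, x⟫_ℂ = avg s fun i => ⟪f i, x⟫_ℂ := by
  simp only [avg, inner_smul_left_eq_smul, sum_inner]

lemma inner_avg_right (x : F) (f : ι → F) : ⟪x, avg s f⟫_ℂ = avg s fun i => ⟪x, f i⟫_ℂ := by
  simp only [avg, inner_smul_right_eq_smul, inner_sum]

lemma re_avg_inner_self (f : ι → F) :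
    (avg s fun i => ⟪f i, f i⟫_ℂ).re = avg s fun i => ‖f i‖ ^ 2 := by
  rw [← Complex.reCLM_apply, map_avg]
  simp only [Complex.reCLM_apply, ← RCLike.re_to_complex, inner_self_eq_norm_sq]

end InnerAvg

lemma tendsto_limUnder_of_norm_le {ι F : Type*} [NormedAddCommGroup F] [ProperSpace F]
    (U : Ultrafilter ι) {f : ι → F} {C : ℝ} (hf : ∀ j, ‖f j‖ ≤ C) :
    Tendsto f U (𝓝 (limUnder U f)) := by
  have hle : (U.map f : Filter F) ≤ 𝓟 (Metric.closedBall 0 C) := by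
    rw [Ultrafilter.coe_map, le_principal_iff, Filter.mem_map]
    exact univ_mem' fun j => by simpa using hf j
  obtain ⟨a, -, ha⟩ := (isCompact_closedBall (0 : F) C).ultrafilter_le_nhds _ hle
  exact tendsto_nhds_limUnder ⟨a, ha⟩

section SemiInnerProduct

variable {α : Type*} (E : Type*) [NormedAddCommGroup E] [InnerProductSpace ℂ E]

def boundedFunctions : Submodule ℂ (α → E) where
  carrier := {v | ∃ C, ∀ n, ‖v n‖ ≤ C}
  add_mem' := by
    rintro v w ⟨C, hC⟩ ⟨D, hD⟩
    exact ⟨C + D, fun n => (norm_add_le _ _).trans (add_le_add (hC n) (hD n))⟩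
  zero_mem' := ⟨0, fun _ => by simp⟩
  smul_mem' := by
    rintro c v ⟨C, hC⟩
    exact ⟨‖c‖ * C, fun n => by
      rw [Pi.smul_apply, norm_smul]; exact mul_le_mul_of_nonneg_left (hC n) (norm_nonneg c)⟩

set_option linter.unusedVariables false in
/-- A copy of `boundedFunctions E` for each `I` and `U`, carrying the semi-inner product
`⟪v, w⟫ = lim_{j → U} avg_{n ∈ I j} ⟪v n, w n⟫`. -/
def UltraAvgSpace (I : ℕ → Finset α) (U : Ultrafilter ℕ) : Type _ :=
  boundedFunctions (α := α) E

namespace UltraAvgSpace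

variable {E} {I : ℕ → Finset α} {U : Ultrafilter ℕ}

instance : AddCommGroup (UltraAvgSpace E I U) :=
  inferInstanceAs (AddCommGroup (boundedFunctions E))

instance : Module ℂ (UltraAvgSpace E I U) :=
  inferInstanceAs (Module ℂ (boundedFunctions E))

instance : FunLike (UltraAvgSpace E I U) α E where
  coe v := (v : boundedFunctions (α := α) E).1
  coe_injective := Subtype.val_injective

def mk (f : α → E) (hf : ∃ C, ∀ n, ‖f n‖ ≤ C) : UltraAvgSpace E I U := ⟨f, hf⟩

@[ext] lemma ext {v w : UltraAvgSpace E I U} (h : ∀ n, v n = w n) : v = w :=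
  DFunLike.ext _ _ h

lemma exists_bound (v : UltraAvgSpace E I U) : ∃ C, 0 ≤ C ∧ ∀ n, ‖v n‖ ≤ C :=
  let ⟨C, hC⟩ := (v : boundedFunctions (α := α) E).2
  ⟨max C 0, le_max_right _ _, fun n => (hC n).trans (le_max_left _ _)⟩

def evalₗ (n : α) : UltraAvgSpace E I U →ₗ[ℂ] E where
  toFun v := v n
  map_add' _ _ := rfl
  map_smul' _ _ := rfl

@[simp] lemma add_apply (v w : UltraAvgSpace E I U) (n : α) : (v + w) n = v n + w n := rfl

@[simp] lemma sub_apply (v w : UltraAvgSpace E I U) (n : α) : (v - w) n = v n - w n := rfl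

@[simp] lemma smul_apply (c : ℂ) (v : UltraAvgSpace E I U) (n : α) : (c • v) n = c • v n := rfl

@[simp] lemma real_smul_apply (r : ℝ) (v : UltraAvgSpace E I U) (n : α) : (r • v) n = r • v n :=
  rfl

lemma avg_apply {ι : Type*} (s : Finset ι) (f : ι → UltraAvgSpace E I U) (n : α) :
    avg s f n = avg s fun i => f i n :=
  map_avg s ((evalₗ n).restrictScalars ℝ) f

lemma exists_norm_avg_inner_le (v w : UltraAvgSpace E I U) :
    ∃ C, ∀ j, ‖avg (I j) fun n => ⟪v n, w n⟫_ℂ‖ ≤ C := by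
  obtain ⟨Cv, hCv, hv⟩ := v.exists_bound
  obtain ⟨Cw, hCw, hw⟩ := w.exists_bound
  exact ⟨Cv * Cw, fun j => norm_avg_le _ (by positivity) fun n _ =>
    (norm_inner_le_norm _ _).trans (mul_le_mul (hv n) (hw n) (norm_nonneg _) hCv)⟩

lemma tendsto_avg_inner_limUnder (v w : UltraAvgSpace E I U) :
    Tendsto (fun j => avg (I j) fun n => ⟪v n, w n⟫_ℂ) U
      (𝓝 (limUnder U fun j => avg (I j) fun n => ⟪v n, w n⟫_ℂ)) :=
  let ⟨_, hC⟩ := exists_norm_avg_inner_le v w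
  tendsto_limUnder_of_norm_le U hC

noncomputable abbrev core : PreInnerProductSpace.Core ℂ (UltraAvgSpace E I U) where
  inner v w := limUnder U fun j => avg (I j) fun n => ⟪v n, w n⟫_ℂ
  conj_inner_symm v w := by
    refine ((((Complex.continuous_conj.tendsto _).comp (tendsto_avg_inner_limUnder w v)).congr
      fun j => ?_).limUnder_eq).symm
    simpa [inner_conj_symm] using map_avg (I j) Complex.conjCLE fun n => ⟪w n, v n⟫_ℂ
  re_inner_nonneg v := by
    refine ge_of_tendsto ((Complex.continuous_re.tendsto _).comp
      (tendsto_avg_inner_limUnder v v)) (Eventually.of_forall fun j => ?_)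
    rw [Function.comp_apply, re_avg_inner_self]
    exact avg_nonneg _ fun _ _ => by positivity
  add_left u v w := by
    refine (((tendsto_avg_inner_limUnder u w).add (tendsto_avg_inner_limUnder v w)).congr
      fun j => ?_).limUnder_eq
    simp only [add_apply, inner_add_left, avg_add]
  smul_left v w c := by
    refine (((tendsto_avg_inner_limUnder v w).const_mul ((starRingEnd ℂ) c)).congr
      fun j => ?_).limUnder_eq
    simp only [smul_apply, inner_smul_left, ← smul_eq_mul, smul_avg]

noncomputable instance : SeminormedAddCommGroup (UltraAvgSpace E I U) :=
  InnerProductSpace.Core.toSeminormedAddCommGroup (c := core)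

noncomputable instance : InnerProductSpace ℂ (UltraAvgSpace E I U) :=
  InnerProductSpace.ofCore core

lemma tendsto_avg_inner (v w : UltraAvgSpace E I U) :
    Tendsto (fun j => avg (I j) fun n => ⟪v n, w n⟫_ℂ) U (𝓝 ⟪v, w⟫_ℂ) :=
  tendsto_avg_inner_limUnder v w

lemma tendsto_avg_norm_sq (v : UltraAvgSpace E I U) :
    Tendsto (fun j => avg (I j) fun n => ‖v n‖ ^ 2) U (𝓝 (‖v‖ ^ 2)) := by
  rw [norm_sq_eq_re_inner (𝕜 := ℂ)]
  exact ((Complex.continuous_re.tendsto _).comp (tendsto_avg_inner v v)).congr fun j =>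
    re_avg_inner_self (I j) _

lemma norm_le_of_forall_norm_le [Nonempty α] {v : UltraAvgSpace E I U} {c : ℝ}
    (hv : ∀ n, ‖v n‖ ≤ c) : ‖v‖ ≤ c := by
  have hc : 0 ≤ c := (norm_nonneg _).trans (hv (Classical.arbitrary α))
  refine (pow_le_pow_iff_left₀ (norm_nonneg _) hc two_ne_zero).1 ?_
  refine le_of_tendsto (tendsto_avg_norm_sq v) (Eventually.of_forall fun j => ?_)
  exact avg_le_of_le _ (by positivity) fun n _ => pow_le_pow_left₀ (norm_nonneg _) (hv n) 2

section Shift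

variable [AddCancelCommMonoid α]

def shift (k : α) : UltraAvgSpace E I U →ₗ[ℂ] UltraAvgSpace E I U where
  toFun v := mk (fun n => v (n + k)) <|
    let ⟨C, _, hC⟩ := v.exists_bound
    ⟨C, fun _ => hC _⟩
  map_add' _ _ := rfl
  map_smul' _ _ := rfl

@[simp] lemma shift_apply (k : α) (v : UltraAvgSpace E I U) (n : α) :
    shift k v n = v (n + k) := rfl

variable [DecidableEq α]

lemma inner_shift_shift (hI : IsFolnerAlong I U) (k : α) (v w : UltraAvgSpace E I U) :
    ⟪shift k v, shift k w⟫_ℂ = ⟪v, w⟫_ℂ := by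
  obtain ⟨Cv, hCv, hv⟩ := v.exists_bound
  obtain ⟨Cw, hCw, hw⟩ := w.exists_bound
  have hvw : ∀ n, ‖⟪v n, w n⟫_ℂ‖ ≤ Cv * Cw := fun n =>
    (norm_inner_le_norm _ _).trans (mul_le_mul (hv n) (hw n) (norm_nonneg _) hCv)
  have hdiff : Tendsto (fun j => (avg (I j) fun n => ⟪v (n + k), w (n + k)⟫_ℂ) -
      avg (I j) fun n => ⟪v n, w n⟫_ℂ) U (𝓝 0) := by
    refine squeeze_zero_norm (fun j => norm_avg_add_sub_avg_le (I j) hvw k) ?_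
    simpa using (hI k).const_mul (Cv * Cw)
  exact sub_eq_zero.1 (tendsto_nhds_unique
    ((tendsto_avg_inner (shift k v) (shift k w)).sub (tendsto_avg_inner v w)) hdiff)

omit [DecidableEq α] in
lemma norm_inner_shift_le_limsup (hU : (U : Filter ℕ) ≤ atTop) (x : UltraAvgSpace E I U) (h : α) :
    ‖⟪shift h x, x⟫_ℂ‖ ≤ limsup (fun j => ‖avg (I j) fun n => ⟪x (n + h), x n⟫_ℂ‖) atTop := by
  obtain ⟨C, hC⟩ := exists_norm_avg_inner_le (shift h x) x
  exact le_limsup_of_tendsto_ultrafilter hU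
    ((continuous_norm.tendsto _).comp (tendsto_avg_inner (shift h x) x))
    (isBoundedUnder_of ⟨C, hC⟩)

lemma norm_shift (hI : IsFolnerAlong I U) (k : α) (v : UltraAvgSpace E I U) :
    ‖shift k v‖ = ‖v‖ := by
  rw [norm_eq_sqrt_re_inner (𝕜 := ℂ), inner_shift_shift hI, ← norm_eq_sqrt_re_inner]

end Shift

section Box

variable {d : ℕ} {I : ℕ → Finset (Fin d → ℕ)}

noncomputable def boxAvg (H : ℕ) : UltraAvgSpace E I U →ₗ[ℂ] UltraAvgSpace E I U :=
  avg (box d H) shift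

lemma boxAvg_eq_avg (H : ℕ) (v : UltraAvgSpace E I U) :
    boxAvg H v = avg (box d H) fun t => shift t v := by
  simp [boxAvg, avg, LinearMap.sum_apply]

lemma boxAvg_apply (H : ℕ) (v : UltraAvgSpace E I U) (n : Fin d → ℕ) :
    boxAvg H v n = avg (box d H) fun t => v (n + t) := by
  simp [boxAvg_eq_avg, avg_apply]

lemma norm_boxAvg_le (hI : IsFolnerAlong I U) (H : ℕ) (v : UltraAvgSpace E I U) :
    ‖boxAvg H v‖ ≤ ‖v‖ := by
  rw [boxAvg_eq_avg]
  exact norm_avg_le _ (norm_nonneg _) fun t _ => (norm_shift hI t v).le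

lemma inner_boxAvg_left (H : ℕ) (v w : UltraAvgSpace E I U) :
    ⟪boxAvg H v, w⟫_ℂ = avg (box d H) fun t => ⟪shift t v, w⟫_ℂ := by
  rw [boxAvg_eq_avg, inner_avg_left]

lemma inner_boxAvg_right (H : ℕ) (v w : UltraAvgSpace E I U) :
    ⟪v, boxAvg H w⟫_ℂ = avg (box d H) fun t => ⟪v, shift t w⟫_ℂ := by
  rw [boxAvg_eq_avg, inner_avg_right]

lemma boxAvg_comm (H K : ℕ) (v : UltraAvgSpace E I U) :
    boxAvg H (boxAvg K v) = boxAvg K (boxAvg H v) := by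
  ext n
  simp only [boxAvg_apply]
  rw [avg_comm]
  simp only [add_right_comm]

variable {H K M : ℕ} {C : ℝ} {v : UltraAvgSpace E I U}

lemma norm_boxAvg_apply_le (hv : ∀ n, ‖v n‖ ≤ C) (n : Fin d → ℕ) : ‖boxAvg H v n‖ ≤ C := by
  rw [boxAvg_apply]
  exact norm_avg_le _ ((norm_nonneg _).trans (hv 0)) fun t _ => hv _

lemma norm_boxAvg_apply_add_sub_le (hH : 0 < H) (hv : ∀ n, ‖v n‖ ≤ C) (n a : Fin d → ℕ) :
    ‖boxAvg H v (n + a) - boxAvg H v n‖ ≤ 2 * C * (∑ i, (a i : ℝ)) / H := by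
  simpa only [boxAvg_apply, add_assoc, add_comm a] using
    norm_avg_box_add_sub_le hH (f := fun m => v (n + m)) (fun _ => hv _) a

lemma norm_boxAvg_boxAvg_apply_sub_le (hH : 0 < H) (hM : 0 < M) (hv : ∀ n, ‖v n‖ ≤ C)
    (n : Fin d → ℕ) : ‖boxAvg H (boxAvg M v) n - boxAvg M v n‖ ≤ 2 * C * (d * H) / M := by
  have hC : 0 ≤ C := (norm_nonneg _).trans (hv 0)
  rw [boxAvg_apply]
  refine norm_avg_sub_le _ (box_nonempty hH) fun t ht => ?_
  calc _ ≤ 2 * C * (∑ i, (t i : ℝ)) / M := norm_boxAvg_apply_add_sub_le hM hv n t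
    _ ≤ 2 * C * (d * H) / M := by gcongr; exact sum_le_of_mem_box ht

end Box

section Invariant

variable {d : ℕ} {I : ℕ → Finset (Fin d → ℕ)} {H K M : ℕ} {C : ℝ}
  {x : UltraAvgSpace E I U}

/-- By the mean ergodic theorem, the norm of the projection of `x` onto the
translation-invariant vectors. -/
noncomputable def infNormBoxAvg (x : UltraAvgSpace E I U) : ℝ :=
  ⨅ M : ℕ, ‖boxAvg (M + 1) x‖

lemma infNormBoxAvg_nonneg (x : UltraAvgSpace E I U) : 0 ≤ infNormBoxAvg x :=
  le_ciInf fun _ => norm_nonneg _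

lemma infNormBoxAvg_le (x : UltraAvgSpace E I U) (hM : 0 < M) :
    infNormBoxAvg x ≤ ‖boxAvg M x‖ := by
  obtain ⟨M, rfl⟩ := Nat.exists_eq_add_one_of_ne_zero hM.ne'
  exact ciInf_le ⟨0, by rintro _ ⟨_, rfl⟩; exact norm_nonneg _⟩ M

lemma le_infNormBoxAvg {a : ℝ} (h : ∀ M, 0 < M → a ≤ ‖boxAvg M x‖) : a ≤ infNormBoxAvg x :=
  le_ciInf fun M => h _ M.succ_pos

lemma exists_norm_boxAvg_lt (x : UltraAvgSpace E I U) {ε : ℝ} (hε : 0 < ε) :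
    ∃ K, 0 < K ∧ ‖boxAvg K x‖ < infNormBoxAvg x + ε := by
  obtain ⟨M, hM⟩ := exists_lt_of_ciInf_lt (lt_add_of_pos_right (infNormBoxAvg x) hε)
  exact ⟨M + 1, M.succ_pos, hM⟩

variable (hI : IsFolnerAlong I U)
include hI

lemma le_norm_boxAvg (hx : ∀ n, ‖x n‖ ≤ C) {a : ℝ} (ha : ∀ᶠ j in U, a ≤ ‖avg (I j) x‖)
    (hM : 0 < M) : a ≤ ‖boxAvg M x‖ := by
  have hC : 0 ≤ C := (norm_nonneg _).trans (hx 0)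
  set e : ℕ → ℝ := fun j => ∑ t ∈ box d M, C * (#((I j).image (· + t) ∆ I j) / #(I j))
  have he : Tendsto e U (𝓝 0) := by
    simpa using tendsto_finsetSum _ fun t _ => (hI t).const_mul C
  have hbound : ∀ j, ‖avg (I j) x‖ ≤ √(avg (I j) fun n => ‖boxAvg M x n‖ ^ 2) + e j := by
    intro j
    have hclose : ‖avg (I j) (boxAvg M x) - avg (I j) x‖ ≤ e j := by
      rw [show ⇑(boxAvg M x) = _ from funext (boxAvg_apply M x), avg_comm]
      refine norm_avg_sub_le _ (box_nonempty hM) fun t ht => ?_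
      exact (norm_avg_add_sub_avg_le (I j) hx t).trans
        (single_le_sum (f := fun t => C * (#((I j).image (· + t) ∆ I j) / #(I j)))
          (fun _ _ => by positivity) ht)
    calc ‖avg (I j) x‖
        ≤ ‖avg (I j) (boxAvg M x)‖ + ‖avg (I j) x - avg (I j) (boxAvg M x)‖ :=
          norm_le_norm_add_norm_sub' _ _
      _ ≤ _ := add_le_add (Real.le_sqrt_of_sq_le (norm_avg_sq_le _ _))
          (by rwa [norm_sub_rev])
  have hlim : Tendsto (fun j => √(avg (I j) fun n => ‖boxAvg M x n‖ ^ 2) + e j) U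
      (𝓝 ‖boxAvg M x‖) := by
    simpa [Real.sqrt_sq (norm_nonneg _)] using
      ((Real.continuous_sqrt.tendsto _).comp (tendsto_avg_norm_sq (boxAvg M x))).add he
  exact ge_of_tendsto hlim (ha.mono fun j hj => hj.trans (hbound j))

lemma infNormBoxAvg_le_of_boxAvg_apply_sub_le {w : UltraAvgSpace E I U} {c : ℝ}
    (h : ∀ M, 0 < M → ∀ n, ‖boxAvg M w n - boxAvg M x n‖ ≤ c / M) :
    infNormBoxAvg x ≤ ‖w‖ := by
  have hM : ∀ M : ℕ, 0 < M → infNormBoxAvg x ≤ ‖w‖ + c / M := fun M hM =>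
    calc infNormBoxAvg x ≤ ‖boxAvg M x‖ := infNormBoxAvg_le x hM
      _ ≤ ‖boxAvg M w‖ + ‖boxAvg M x - boxAvg M w‖ := norm_le_norm_add_norm_sub' _ _
      _ ≤ ‖w‖ + c / M := add_le_add (norm_boxAvg_le hI M w)
          (norm_le_of_forall_norm_le fun n => by simpa [norm_sub_rev] using h M hM n)
  simpa using ge_of_tendsto (tendsto_const_nhds.add (tendsto_const_div_atTop_nhds_zero_nat c))
    ((eventually_gt_atTop 0).mono hM)

omit hI in
lemma norm_boxAvg_midpoint_apply_sub_le (hx : ∀ n, ‖x n‖ ≤ C) (hH : 0 < H) (hK : 0 < K)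
    (hM : 0 < M) (n : Fin d → ℕ) :
    ‖boxAvg M ((2 : ℝ)⁻¹ • (boxAvg H (boxAvg K x) + boxAvg K x)) n - boxAvg M x n‖ ≤
      2 * C * (d * (H + K)) / M := by
  have hC : 0 ≤ C := (norm_nonneg _).trans (hx 0)
  have h₁ : ‖boxAvg M (boxAvg H (boxAvg K x)) n - boxAvg M (boxAvg K x) n‖ ≤
      2 * C * (d * H) / M := by
    rw [boxAvg_comm M H]
    exact norm_boxAvg_boxAvg_apply_sub_le hH hM (norm_boxAvg_apply_le hx) n
  have h₂ : ‖boxAvg M (boxAvg K x) n - boxAvg M x n‖ ≤ 2 * C * (d * K) / M := by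
    rw [boxAvg_comm M K]
    exact norm_boxAvg_boxAvg_apply_sub_le hK hM hx n
  set p := boxAvg M (boxAvg H (boxAvg K x)) n
  set q := boxAvg M (boxAvg K x) n
  have hsplit : boxAvg M ((2 : ℝ)⁻¹ • (boxAvg H (boxAvg K x) + boxAvg K x)) n -
      boxAvg M x n = (2 : ℝ)⁻¹ • (p - q) + (q - boxAvg M x n) := by
    rw [LinearMap.map_smul_of_tower, map_add, real_smul_apply, add_apply]
    module
  rw [hsplit]
  refine (norm_add_le _ _).trans ?_
  rw [norm_smul, Real.norm_of_nonneg (by norm_num)]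
  have hH₀ : 0 ≤ 2 * C * (d * H) / M := by positivity
  have hsum : 2 * C * (d * (H + K)) / M = 2 * C * (d * H) / M + 2 * C * (d * K) / M := by ring
  rw [hsum]
  linarith [mul_le_mul_of_nonneg_left h₁ (by norm_num : (0 : ℝ) ≤ 2⁻¹)]

lemma two_mul_sq_infNormBoxAvg_le (hx : ∀ n, ‖x n‖ ≤ C) (hH : 0 < H) (hK : 0 < K) :
    2 * infNormBoxAvg x ^ 2 ≤
      ‖boxAvg K x‖ ^ 2 + (⟪boxAvg H (boxAvg K x), boxAvg K x⟫_ℂ).re := by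
  set b := boxAvg K x
  set u := boxAvg H b
  have hν : infNormBoxAvg x ≤ 2⁻¹ * ‖u + b‖ := by
    rw [← Real.norm_of_nonneg (by norm_num : (0 : ℝ) ≤ 2⁻¹), ← norm_smul]
    exact infNormBoxAvg_le_of_boxAvg_apply_sub_le hI fun M hM =>
      norm_boxAvg_midpoint_apply_sub_le hx hH hK hM
  have hu : ‖u‖ ^ 2 ≤ ‖b‖ ^ 2 := pow_le_pow_left₀ (norm_nonneg _) (norm_boxAvg_le hI H b) 2
  have hsq : ‖u + b‖ ^ 2 = ‖u‖ ^ 2 + 2 * (⟪u, b⟫_ℂ).re + ‖b‖ ^ 2 := norm_add_sq (𝕜 := ℂ) u b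
  nlinarith [mul_self_le_mul_self (infNormBoxAvg_nonneg x) hν]

lemma norm_inner_boxAvg_boxAvg_sub_le (hK : 0 < K) {y z : UltraAvgSpace E I U} {ε : ℝ}
    (hy : ∀ n, ∀ k ∈ box d K, ‖y (n + k) - y n‖ ≤ ε) :
    ‖⟪boxAvg K y, boxAvg K z⟫_ℂ - ⟪y, z⟫_ℂ‖ ≤ 2 * ε * ‖z‖ := by
  have hnear : ‖boxAvg K y - y‖ ≤ ε := norm_le_of_forall_norm_le fun n => by
    rw [sub_apply, boxAvg_apply]
    exact norm_avg_sub_le _ (box_nonempty hK) (hy n)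
  have hshift : ∀ k ∈ box d K, ‖⟪y, shift k z⟫_ℂ - ⟪y, z⟫_ℂ‖ ≤ ε * ‖z‖ := fun k hk => by
    rw [← inner_shift_shift hI k y z, ← inner_sub_left, ← norm_shift hI k z]
    refine (norm_inner_le_norm _ _).trans (mul_le_mul_of_nonneg_right ?_ (norm_nonneg _))
    exact norm_le_of_forall_norm_le fun n => by simpa [norm_sub_rev] using hy n k hk
  have hsplit : ⟪boxAvg K y, boxAvg K z⟫_ℂ - ⟪y, z⟫_ℂ =
      ⟪boxAvg K y - y, boxAvg K z⟫_ℂ + (⟪y, boxAvg K z⟫_ℂ - ⟪y, z⟫_ℂ) := by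
    rw [inner_sub_left]; ring
  rw [hsplit, inner_boxAvg_right K y z]
  refine (norm_add_le _ _).trans ?_
  have h₁ : ‖⟪boxAvg K y - y, boxAvg K z⟫_ℂ‖ ≤ ε * ‖z‖ :=
    (norm_inner_le_norm _ _).trans
      (mul_le_mul hnear (norm_boxAvg_le hI K z) (norm_nonneg _) ((norm_nonneg _).trans hnear))
  linarith [norm_avg_sub_le _ (box_nonempty hK) hshift]

lemma norm_avg_inner_shift_sub_inner_boxAvg_le (hH : 0 < H) (x : UltraAvgSpace E I U) :
    ‖(avg (Fintype.piFinset fun _ => Icc 1 H) fun h => ⟪shift h x, x⟫_ℂ) -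
      ⟪boxAvg H x, x⟫_ℂ‖ ≤ 2 * ‖x‖ ^ 2 * d / H := by
  rw [← image_add_one_box, avg_image _ (add_left_injective 1).injOn, inner_boxAvg_left]
  have hbound : ∀ t, ‖⟪shift t x, x⟫_ℂ‖ ≤ ‖x‖ ^ 2 := fun t =>
    (norm_inner_le_norm _ _).trans_eq (by rw [norm_shift hI, sq])
  simpa using norm_avg_box_add_sub_le hH hbound 1

lemma re_inner_boxAvg_boxAvg_le (hx : ∀ n, ‖x n‖ ≤ C) (hH : 0 < H) (hK : 0 < K) :
    (⟪boxAvg H (boxAvg K x), boxAvg K x⟫_ℂ).re ≤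
      (avg (Fintype.piFinset fun _ => Icc 1 H) fun h => ⟪shift h x, x⟫_ℂ).re +
        (4 * C ^ 2 * d * K + 2 * C ^ 2 * d) / H := by
  have hC : 0 ≤ C := (norm_nonneg _).trans (hx 0)
  have hxC : ‖x‖ ≤ C := norm_le_of_forall_norm_le hx
  have hslow : ∀ n, ∀ k ∈ box d K, ‖boxAvg H x (n + k) - boxAvg H x n‖ ≤ 2 * C * (d * K) / H :=
    fun n k hk => (norm_boxAvg_apply_add_sub_le hH hx n k).trans (by
      gcongr; exact sum_le_of_mem_box hk)
  have h₁ := norm_inner_boxAvg_boxAvg_sub_le hI hK hslow (z := x)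
  have h₂ := norm_avg_inner_shift_sub_inner_boxAvg_le hI hH x
  rw [boxAvg_comm H K]
  set a := ⟪boxAvg K (boxAvg H x), boxAvg K x⟫_ℂ
  set b := ⟪boxAvg H x, x⟫_ℂ
  set c := avg (Fintype.piFinset fun _ => Icc 1 H) fun h => ⟪shift h x, x⟫_ℂ
  have hre : a.re - c.re ≤ ‖a - b‖ + ‖c - b‖ :=
    calc a.re - c.re = (a - b).re - (c - b).re := by simp only [Complex.sub_re]; ring
      _ ≤ ‖a - b‖ + ‖c - b‖ := by
        linarith [Complex.re_le_norm (a - b), (abs_le.1 (Complex.abs_re_le_norm (c - b))).1]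
  have hbd₁ : 2 * (2 * C * (d * K) / H) * ‖x‖ ≤ 4 * C ^ 2 * d * K / H := by
    calc _ ≤ 2 * (2 * C * (d * K) / H) * C := by gcongr
      _ = _ := by ring
  have hbd₂ : 2 * ‖x‖ ^ 2 * d / H ≤ 2 * C ^ 2 * d / H := by gcongr
  rw [add_div]
  linarith

lemma sq_infNormBoxAvg_le_limsup (hx : ∀ n, ‖x n‖ ≤ C) {γ : (Fin d → ℕ) → ℝ}
    (hγ : ∀ h, ‖⟪shift h x, x⟫_ℂ‖ ≤ γ h)
    (hbdd : IsBoundedUnder (· ≤ ·) atTop fun H => avg (Fintype.piFinset fun _ => Icc 1 H) γ) :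
    infNormBoxAvg x ^ 2 ≤ limsup (fun H => avg (Fintype.piFinset fun _ => Icc 1 H) γ) atTop := by
  set ν := infNormBoxAvg x
  have hη : ∀ η > 0, 2 * ν ^ 2 - (ν + η) ^ 2 ≤
      limsup (fun H => avg (Fintype.piFinset fun _ => Icc 1 H) γ) atTop := by
    intro η hη
    obtain ⟨K, hK, hKν⟩ := exists_norm_boxAvg_lt x hη
    refine le_limsup_of_le_add_div hbdd (c := 4 * C ^ 2 * d * K + 2 * C ^ 2 * d) fun H hH => ?_
    have hre : (avg (Fintype.piFinset fun _ => Icc 1 H) fun h => ⟪shift h x, x⟫_ℂ).re ≤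
        avg (Fintype.piFinset fun _ => Icc 1 H) γ := by
      rw [← Complex.reCLM_apply, map_avg]
      exact avg_le_avg _ fun h _ => (Complex.re_le_norm _).trans (hγ h)
    have hK' : ‖boxAvg K x‖ ^ 2 ≤ (ν + η) ^ 2 := pow_le_pow_left₀ (norm_nonneg _) hKν.le 2
    linarith [two_mul_sq_infNormBoxAvg_le hI hx hH hK, re_inner_boxAvg_boxAvg_le hI hx hH hK]
  have ht : Tendsto (fun η => 2 * ν ^ 2 - (ν + η) ^ 2) (𝓝[>] 0) (𝓝 (ν ^ 2)) := by
    have hcont : Continuous fun η : ℝ => 2 * ν ^ 2 - (ν + η) ^ 2 := by fun_prop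
    convert (hcont.tendsto 0).mono_left nhdsWithin_le_nhds using 2
    ring
  exact le_of_tendsto ht (eventually_nhdsWithin_of_forall hη)

end Invariant

end UltraAvgSpace

end SemiInnerProduct

open UltraAvgSpace in
theorem limsup_norm_avg_sq_le {d : ℕ} {E : Type*} [NormedAddCommGroup E] [InnerProductSpace ℂ E]
    {ξ : (Fin d → ℕ) → E} {C : ℝ} (hξ : ∀ n, ‖ξ n‖ ≤ C) {I : ℕ → Finset (Fin d → ℕ)}
    (hI : IsFolnerAlong I atTop) :
    limsup (fun j => ‖avg (I j) ξ‖ ^ 2) atTop ≤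
      limsup (fun H => avg (Fintype.piFinset fun _ => Icc 1 H) fun h =>
        limsup (fun j => ‖avg (I j) fun n => ⟪ξ (n + h), ξ n⟫_ℂ‖) atTop) atTop := by
  have hC : 0 ≤ C := (norm_nonneg _).trans (hξ 0)
  have hγ : ∀ h, limsup (fun j => ‖avg (I j) fun n => ⟪ξ (n + h), ξ n⟫_ℂ‖) atTop ≤ C ^ 2 :=
    fun h => limsup_le_of_le (isBoundedUnder_of ⟨0, fun j => norm_nonneg _⟩).isCoboundedUnder_le
      (Eventually.of_forall fun j => norm_avg_le _ (sq_nonneg C) fun n _ =>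
        (norm_inner_le_norm _ _).trans (sq C ▸ mul_le_mul (hξ _) (hξ _) (norm_nonneg _) hC))
  refine limsup_le_of_forall_ultrafilter
    (isBoundedUnder_of ⟨0, fun j => by positivity⟩).isCoboundedUnder_le fun U hU a ha => ?_
  let x : UltraAvgSpace E I U := mk ξ ⟨C, hξ⟩
  have hIU : IsFolnerAlong I U := hI.mono hU
  have hsqrt : √a ≤ infNormBoxAvg x := le_infNormBoxAvg fun M hM =>
    le_norm_boxAvg hIU hξ (ha.mono fun j hj => (Real.sqrt_le_left (norm_nonneg _)).2 hj) hM
  exact ((Real.sqrt_le_left (infNormBoxAvg_nonneg x)).1 hsqrt).trans <|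
    sq_infNormBoxAvg_le_limsup hIU hξ (norm_inner_shift_le_limsup hU x)
      (isBoundedUnder_of ⟨C ^ 2, fun H => avg_le_of_le _ (sq_nonneg C) fun h _ => hγ h⟩)

end VanDerCorput

open VanDerCorput in
theorem vdc_folner_general (d : ℕ) (E : Type*) [NormedAddCommGroup E]
    [InnerProductSpace ℂ E] (ξ : (Fin d → ℕ) → E) (C : ℝ) (hbd : ∀ n, ‖ξ n‖ ≤ C)
    (I : ℕ → Finset (Fin d → ℕ))
    (hFolner : ∀ k : Fin d → ℤ,
      Tendsto (fun j =>
          ((symmDiff ((I j).image fun n => fun i => (n i : ℤ) + k i)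
              ((I j).image fun n => fun i => (n i : ℤ))).card : ℝ) / (I j).card)
        atTop (nhds 0)) :
    limsup (fun j => ‖(((I j).card : ℝ))⁻¹ • ∑ n ∈ I j, ξ n‖ ^ 2) atTop ≤
      4 * limsup (fun H : ℕ =>
        ((H : ℝ) ^ d)⁻¹ * ∑ h ∈ Fintype.piFinset fun _ : Fin d => Finset.Icc 1 H,
          limsup (fun j =>
            (((I j).card : ℝ))⁻¹ * ‖∑ n ∈ I j, (inner ℂ (ξ (n + h)) (ξ n) : ℂ)‖) atTop) atTop := by
  have hC : 0 ≤ C := (norm_nonneg _).trans (hbd 0)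
  have key := limsup_norm_avg_sq_le hbd (isFolnerAlong_of_int hFolner)
  have hnonneg : 0 ≤ limsup (fun j => ‖avg (I j) ξ‖ ^ 2) atTop :=
    le_limsup_of_frequently_le (Frequently.of_forall fun j => by positivity)
      (isBoundedUnder_of ⟨C ^ 2, fun j =>
        pow_le_pow_left₀ (norm_nonneg _) (norm_avg_le _ hC fun n _ => hbd n) 2⟩)
  calc limsup (fun j => ‖avg (I j) ξ‖ ^ 2) atTop
      ≤ limsup (fun H => avg (Fintype.piFinset fun _ => Icc 1 H) fun h =>
          limsup (fun j => ‖avg (I j) fun n => ⟪ξ (n + h), ξ n⟫_ℂ‖) atTop) atTop := key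
    _ ≤ 4 * _ := le_mul_of_one_le_left (hnonneg.trans key) (by norm_num)
    _ = _ := by
      simp only [norm_avg_eq]
      simp only [avg, Fintype.card_piFinset, Nat.card_Icc, add_tsub_cancel_right, prod_const,
        card_univ, Fintype.card_fin, Nat.cast_pow, smul_eq_mul]

/-- The van der Corput inequality for Følner averages: if `(ξ_n)` is a bounded sequence in an
inner product space and `(I j)` is a Følner sequence of (nonempty) finite subsets of `ℕ^d`,
then the `limsup` over `j` of the squared norm of the average `(1/|I j|) ∑_{n ∈ I j} ξ n` is at
most `4` times the `limsup` over `H` of `(1/H^d) ∑_{h ∈ [H]^d}` of the `limsup` over `j` of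
`|(1/|I j|) ∑_{n ∈ I j} ⟪ξ (n+h), ξ n⟫|`. -/
theorem vdc_folner (d : ℕ) (hd : 0 < d) (E : Type*) [NormedAddCommGroup E]
    [InnerProductSpace ℂ E] (ξ : (Fin d → ℕ) → E) (C : ℝ) (hbd : ∀ n, ‖ξ n‖ ≤ C)
    (I : ℕ → Finset (Fin d → ℕ)) (hne : ∀ j, (I j).Nonempty)
    (hFolner : ∀ k : Fin d → ℤ,
      Tendsto (fun j =>
          ((symmDiff ((I j).image fun n => fun i => (n i : ℤ) + k i)
              ((I j).image fun n => fun i => (n i : ℤ))).card : ℝ) / (I j).card)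
        atTop (nhds 0)) :
    limsup (fun j => ‖(((I j).card : ℝ))⁻¹ • ∑ n ∈ I j, ξ n‖ ^ 2) atTop ≤
      4 * limsup (fun H : ℕ =>
        ((H : ℝ) ^ d)⁻¹ * ∑ h ∈ Fintype.piFinset fun _ : Fin d => Finset.Icc 1 H,
          limsup (fun j =>
            (((I j).card : ℝ))⁻¹ * ‖∑ n ∈ I j, (inner ℂ (ξ (n + h)) (ξ n) : ℂ)‖) atTop) atTop :=
  vdc_folner_general d E ξ C hbd I hFolner
end

section
/- Let a : ℕ² → ℂ be a bounded sequence and let (L_N), (L'_N) be sequences of positive integers with L_N/N → 0 and L'_N/N → 0 as N → ∞. Suppose that (1/(L_N L'_{N'})) Σ_{n ∈ (N, N+L_N], n' ∈ (N', N'+L'_{N'}]} a(n,n') → 0 as N, N' → ∞. Then (1/(N N')) Σ_{n ∈ [N], n' ∈ [N']} a(n,n') → 0 as N, N' → ∞. -/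
open Filter Finset

/-!
Given `ε` and `δ`, take `K` so large that `L M ≤ δ M`, `L' M ≤ δ M` and all box averages are
below `ε` once `M, M' ≥ K`. The intervals `(M, M + L M]`, laid end to end from `K` on, tile some
`(K, B]` with `N ≤ B ≤ (1 + δ) N`, and likewise `(K, B']` with `N' ≤ B' ≤ (1 + δ) N'`. The sum
over `(K, B] × (K, B']` splits into the sums over the product tiles, each at most `ε` times the
area of its tile, so it is at most `ε B B'`. The rectangle `[N] × [N']` differs from
`(K, B] × (K, B']` in `O(K N + K N' + δ N N')` points, each contributing at most `sup |a|`.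
-/

/-- `tilePoint L K k` is the left endpoint of the `k`-th interval of the tiling of `(K, ∞)` by
consecutive intervals of the form `(M, M + L M]`. -/
def tilePoint (L : ℕ → ℕ) (K : ℕ) : ℕ → ℕ
  | 0 => K
  | k + 1 => tilePoint L K k + L (tilePoint L K k)

section TilePoint

variable (L : ℕ → ℕ) (K : ℕ)

@[simp]
theorem tilePoint_zero : tilePoint L K 0 = K := rfl

theorem tilePoint_succ (k : ℕ) :
    tilePoint L K (k + 1) = tilePoint L K k + L (tilePoint L K k) := rfl

theorem tilePoint_mono : Monotone (tilePoint L K) :=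
  monotone_nat_of_le_succ fun _ => Nat.le_add_right _ _

theorem tilePoint_strictMono {L : ℕ → ℕ} (hL : ∀ M, 0 < L M) (K : ℕ) :
    StrictMono (tilePoint L K) :=
  strictMono_nat_of_lt_succ fun k => by simp [tilePoint_succ, hL]

theorem le_tilePoint (k : ℕ) : K ≤ tilePoint L K k := tilePoint_mono L K k.zero_le

theorem tilePoint_eq_add_sum (m : ℕ) :
    tilePoint L K m = K + ∑ k ∈ range m, L (tilePoint L K k) := by
  induction m with
  | zero => simp
  | succ m ih => rw [sum_range_succ, tilePoint_succ, ih]; ring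

theorem sum_Ioc_tilePoint {M : Type*} [AddCommMonoid M] (f : ℕ → M) (m : ℕ) :
    ∑ n ∈ Ioc K (tilePoint L K m), f n =
      ∑ k ∈ range m, ∑ n ∈ Ioc (tilePoint L K k) (tilePoint L K k + L (tilePoint L K k)), f n := by
  induction m with
  | zero => simp
  | succ m ih =>
    rw [sum_range_succ, ← ih, tilePoint_succ,
      sum_Ioc_consecutive _ (le_tilePoint L K m) (Nat.le_add_right _ _)]

theorem exists_le_tilePoint_le {L : ℕ → ℕ} (hL : ∀ M, 0 < L M) {K N : ℕ} (hKN : K ≤ N) {δ : ℝ}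
    (hδ : 0 ≤ δ) (hLδ : ∀ M, K ≤ M → (L M : ℝ) ≤ δ * M) :
    ∃ m, N ≤ tilePoint L K m ∧ (tilePoint L K m : ℝ) ≤ (1 + δ) * N := by
  have hex : ∃ m, N ≤ tilePoint L K m := ⟨N, (tilePoint_strictMono hL K).id_le N⟩
  refine ⟨Nat.find hex, Nat.find_spec hex, ?_⟩
  have hN : (0 : ℝ) ≤ δ * N := by positivity
  rcases hm : Nat.find hex with _ | j
  · have : (K : ℝ) ≤ N := by exact_mod_cast hKN
    simp only [tilePoint_zero]
    linarith
  · have hj : (tilePoint L K j : ℝ) ≤ N := by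
      exact_mod_cast (not_le.1 (Nat.find_min hex (by omega : j < Nat.find hex))).le
    have := hLδ _ (le_tilePoint L K j)
    rw [tilePoint_succ]
    push_cast
    nlinarith

end TilePoint

theorem norm_sum_sub_sum_le_of_subset {ι E : Type*} [SeminormedAddCommGroup E] {s t : Finset ι}
    (hts : t ⊆ s) {f : ι → E} {C : ℝ} (hf : ∀ i ∈ s, ‖f i‖ ≤ C) :
    ‖∑ i ∈ s, f i - ∑ i ∈ t, f i‖ ≤ C * (#s - #t) := by
  classical
  rw [← sum_sdiff_eq_sub hts]
  calc _ ≤ ∑ _ ∈ s \ t, C := norm_sum_le_of_le _ fun i hi => hf i (sdiff_subset hi)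
    _ = C * (#s - #t) := by
      rw [sum_const, card_sdiff_of_subset hts, nsmul_eq_mul, Nat.cast_sub (card_le_card hts)]
      ring

theorem eventually_le_mul_of_tendsto_div_zero {f : ℕ → ℝ}
    (hf : Tendsto (fun N => f N / N) atTop (nhds 0)) {δ : ℝ} (hδ : 0 < δ) :
    ∀ᶠ N in atTop, f N ≤ δ * N := by
  filter_upwards [hf.eventually (gt_mem_nhds hδ), eventually_gt_atTop 0] with N hN hN0
  exact ((div_lt_iff₀ (by exact_mod_cast hN0)).1 hN).le

section BoxSums

variable {E : Type*} [SeminormedAddCommGroup E] {a : ℕ → ℕ → E} {C : ℝ} {L L' : ℕ → ℕ}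

theorem norm_sum_Ioc_tilePoint_le {K : ℕ} {ε : ℝ}
    (hbox : ∀ M M', K ≤ M → K ≤ M' →
      ‖∑ n ∈ Ioc M (M + L M), ∑ n' ∈ Ioc M' (M' + L' M'), a n n'‖ ≤ ε * (L M * L' M'))
    (m m' : ℕ) :
    ‖∑ n ∈ Ioc K (tilePoint L K m), ∑ n' ∈ Ioc K (tilePoint L' K m'), a n n'‖ ≤
      ε * (((tilePoint L K m : ℝ) - K) * ((tilePoint L' K m' : ℝ) - K)) := by
  set t := tilePoint L K
  set t' := tilePoint L' K
  have hsplit : ∑ n ∈ Ioc K (t m), ∑ n' ∈ Ioc K (t' m'), a n n' =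
      ∑ k ∈ range m, ∑ k' ∈ range m',
        ∑ n ∈ Ioc (t k) (t k + L (t k)), ∑ n' ∈ Ioc (t' k') (t' k' + L' (t' k')), a n n' := by
    simp only [t, t', sum_Ioc_tilePoint]
    exact sum_congr rfl fun k _ => sum_comm
  calc _ ≤ ∑ k ∈ range m, ∑ k' ∈ range m', ε * ((L (t k) : ℝ) * L' (t' k')) := by
        rw [hsplit]
        exact norm_sum_le_of_le _ fun k _ => norm_sum_le_of_le _ fun k' _ =>
          hbox _ _ (le_tilePoint L K k) (le_tilePoint L' K k')
    _ = ε * ((∑ k ∈ range m, (L (t k) : ℝ)) * ∑ k' ∈ range m', (L' (t' k') : ℝ)) := by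
        simp only [← mul_sum, sum_mul_sum]
    _ = _ := by
        simp only [t, t', tilePoint_eq_add_sum L K m, tilePoint_eq_add_sum L' K m']
        push_cast
        ring

theorem norm_sum_Ioc_zero_le_norm_sum_Ioc_add (hC : ∀ n n', ‖a n n'‖ ≤ C) {K N N' B B' : ℕ}
    (hKB : K ≤ B) (hKB' : K ≤ B') (hNB : N ≤ B) (hNB' : N' ≤ B') :
    ‖∑ n ∈ Ioc 0 N, ∑ n' ∈ Ioc 0 N', a n n'‖ ≤
      ‖∑ n ∈ Ioc K B, ∑ n' ∈ Ioc K B', a n n'‖ + C * ((B : ℝ) * B' - (B - K) * (B' - K)) +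
        C * ((B : ℝ) * B' - N * N') := by
  simp only [← sum_product']
  have hcard : ∀ {x y x' y' : ℕ}, x ≤ y → x' ≤ y' →
      (#(Ioc x y ×ˢ Ioc x' y') : ℝ) = ((y : ℝ) - x) * ((y' : ℝ) - x') := by
    intro x y x' y' h h'
    rw [card_product, Nat.card_Ioc, Nat.card_Ioc]
    push_cast [h, h']
    ring
  have hsub : ∀ {s t : Finset (ℕ × ℕ)}, t ⊆ s →
      ‖∑ p ∈ s, a p.1 p.2 - ∑ p ∈ t, a p.1 p.2‖ ≤ C * (#s - #t) :=
    fun h => norm_sum_sub_sum_le_of_subset h fun p _ => hC p.1 p.2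
  have hrim := hsub (product_subset_product (Ioc_subset_Ioc_left (b := B) K.zero_le)
    (Ioc_subset_Ioc_left (b := B') K.zero_le))
  have hcorner := hsub (product_subset_product (Ioc_subset_Ioc_right (a := 0) hNB)
    (Ioc_subset_Ioc_right (a := 0) hNB'))
  rw [hcard B.zero_le B'.zero_le, hcard hKB hKB', Nat.cast_zero, sub_zero, sub_zero] at hrim
  rw [hcard B.zero_le B'.zero_le, hcard N.zero_le N'.zero_le, Nat.cast_zero, sub_zero, sub_zero,
    sub_zero, sub_zero] at hcorner
  calc _ = ‖∑ p ∈ Ioc K B ×ˢ Ioc K B', a p.1 p.2 +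
          (∑ p ∈ Ioc 0 B ×ˢ Ioc 0 B', a p.1 p.2 - ∑ p ∈ Ioc K B ×ˢ Ioc K B', a p.1 p.2) -
          (∑ p ∈ Ioc 0 B ×ˢ Ioc 0 B', a p.1 p.2 - ∑ p ∈ Ioc 0 N ×ˢ Ioc 0 N', a p.1 p.2)‖ := by
        congr 1
        abel
    _ ≤ _ := (norm_sub_le _ _).trans (add_le_add (norm_add_le_of_le le_rfl hrim) hcorner)

theorem norm_sum_Ioc_zero_le (hC : ∀ n n', ‖a n n'‖ ≤ C) (hL0 : ∀ M, 0 < L M)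
    (hL'0 : ∀ M, 0 < L' M) {K : ℕ} {δ ε : ℝ} (hδ0 : 0 ≤ δ) (hδ1 : δ ≤ 1) (hε : 0 ≤ ε)
    (hLδ : ∀ M, K ≤ M → (L M : ℝ) ≤ δ * M) (hL'δ : ∀ M, K ≤ M → (L' M : ℝ) ≤ δ * M)
    (hbox : ∀ M M', K ≤ M → K ≤ M' →
      ‖∑ n ∈ Ioc M (M + L M), ∑ n' ∈ Ioc M' (M' + L' M'), a n n'‖ ≤ ε * (L M * L' M'))
    {N N' : ℕ} (hN : K ≤ N) (hN' : K ≤ N') :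
    ‖∑ n ∈ Ioc 0 N, ∑ n' ∈ Ioc 0 N', a n n'‖ ≤
      (3 * C * δ + 4 * ε) * (N * N') + 2 * C * K * (N + N') := by
  obtain ⟨m, hNB, hB⟩ := exists_le_tilePoint_le hL0 hN hδ0 hLδ
  obtain ⟨m', hNB', hB'⟩ := exists_le_tilePoint_le hL'0 hN' hδ0 hL'δ
  have hdecomp := norm_sum_Ioc_zero_le_norm_sum_Ioc_add hC (hN.trans hNB) (hN'.trans hNB') hNB hNB'
  have htiles := norm_sum_Ioc_tilePoint_le hbox m m'
  set B := tilePoint L K m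
  set B' := tilePoint L' K m'
  have hC0 : 0 ≤ C := (norm_nonneg _).trans (hC 0 0)
  have hK : (K : ℝ) ≤ N := by exact_mod_cast hN
  have hK' : (K : ℝ) ≤ N' := by exact_mod_cast hN'
  have hNB_r : (N : ℝ) ≤ B := by exact_mod_cast hNB
  have hNB'_r : (N' : ℝ) ≤ B' := by exact_mod_cast hNB'
  have hK0 : (0 : ℝ) ≤ K := K.cast_nonneg
  have hB2 : (B : ℝ) ≤ 2 * N := by nlinarith
  have hB2' : (B' : ℝ) ≤ 2 * N' := by nlinarith
  have htiles_le : ((B : ℝ) - K) * (B' - K) ≤ 4 * (N * N') := by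
    nlinarith [mul_le_mul (by linarith : (B : ℝ) - K ≤ 2 * N) (by linarith : (B' : ℝ) - K ≤ 2 * N')
      (by linarith) (by positivity)]
  have hrim_le : (B : ℝ) * B' - (B - K) * (B' - K) ≤ 2 * K * (N + N') := by
    nlinarith [mul_le_mul_of_nonneg_left hB2 hK0, mul_le_mul_of_nonneg_left hB2' hK0]
  have hcorner_le : (B : ℝ) * B' - N * N' ≤ 3 * δ * (N * N') := by
    nlinarith [mul_le_mul_of_nonneg_right (by linarith : (B : ℝ) - N ≤ δ * N)
        (by linarith : (0 : ℝ) ≤ B'),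
      mul_le_mul_of_nonneg_left (by linarith : (B' : ℝ) - N' ≤ δ * N') N.cast_nonneg,
      mul_le_mul_of_nonneg_left hB2' (by positivity : 0 ≤ δ * (N : ℝ))]
  calc _ ≤ ε * (((B : ℝ) - K) * (B' - K)) + C * ((B : ℝ) * B' - (B - K) * (B' - K)) +
        C * ((B : ℝ) * B' - N * N') := by linarith
    _ ≤ ε * (4 * (N * N')) + C * (2 * K * (N + N')) + C * (3 * δ * (N * N')) := by gcongr
    _ = _ := by ring

theorem eventually_norm_sum_Ioc_lt (hC : ∀ n n', ‖a n n'‖ ≤ C) (hL0 : ∀ M, 0 < L M)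
    (hL'0 : ∀ M, 0 < L' M)
    (hL : Tendsto (fun N => (L N : ℝ) / N) atTop (nhds 0))
    (hL' : Tendsto (fun N => (L' N : ℝ) / N) atTop (nhds 0))
    (hbox : ∀ ε > 0, ∀ᶠ p : ℕ × ℕ in atTop ×ˢ atTop,
      ‖∑ n ∈ Ioc p.1 (p.1 + L p.1), ∑ n' ∈ Ioc p.2 (p.2 + L' p.2), a n n'‖ ≤
        ε * (L p.1 * L' p.2))
    {η : ℝ} (hη : 0 < η) :
    ∀ᶠ p : ℕ × ℕ in atTop ×ˢ atTop,
      ‖∑ n ∈ Ioc 0 p.1, ∑ n' ∈ Ioc 0 p.2, a n n'‖ < η * (p.1 * p.2) := by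
  have hC0 : 0 ≤ C := (norm_nonneg _).trans (hC 0 0)
  obtain ⟨c, hc0, hc⟩ := exists_pos_mul_lt (by positivity : 0 < η / 4) (3 * C)
  set δ := min 1 c
  have hδ0 : 0 < δ := lt_min one_pos hc0
  have hCδ : 3 * C * δ ≤ η / 4 :=
    (mul_le_mul_of_nonneg_left (min_le_right _ _) (by positivity)).trans hc.le
  have hev := ((eventually_le_mul_of_tendsto_div_zero hL hδ0).prod_mk
    (eventually_le_mul_of_tendsto_div_zero hL' hδ0)).and (hbox (η / 16) (by positivity))
  rw [prod_atTop_atTop_eq] at hev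
  obtain ⟨K, hK⟩ := eventually_atTop_prod_self.1 hev
  have hlarge : ∀ᶠ N : ℕ in atTop, K ≤ N ∧ 8 * C * K < η * N :=
    (eventually_ge_atTop K).and
      ((tendsto_natCast_atTop_atTop.const_mul_atTop hη).eventually_gt_atTop _)
  filter_upwards [hlarge.prod_mk hlarge] with ⟨N, N'⟩ ⟨⟨hKN, hN⟩, hKN', hN'⟩
  have hsum := norm_sum_Ioc_zero_le hC hL0 hL'0 hδ0.le (min_le_left _ _) (by positivity)
    (fun M hM => (hK M K hM le_rfl).1.1) (fun M hM => (hK K M le_rfl hM).1.2)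
    (fun M M' hM hM' => (hK M M' hM hM').2) hKN hKN'
  have hCK : (0 : ℝ) ≤ 8 * C * K := by positivity
  have hNpos : (0 : ℝ) < N := pos_of_mul_pos_right (hCK.trans_lt hN) hη.le
  have hN'pos : (0 : ℝ) < N' := pos_of_mul_pos_right (hCK.trans_lt hN') hη.le
  have h1 := mul_lt_mul_of_pos_right hN hN'pos
  have h2 := mul_lt_mul_of_pos_right hN' hNpos
  have h3 := mul_le_mul_of_nonneg_right hCδ (by positivity : (0 : ℝ) ≤ N * N')
  linarith

end BoxSums

/-- If `a : ℕ² → ℂ` is bounded, `L_N/N → 0`, `L'_N/N → 0`, and the averages of `a` over the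
boxes `(N, N+L_N] × (N', N'+L'_{N'}]` tend to `0` as `N, N' → ∞`, then the Cesàro averages
`(1/(N N')) ∑_{n ∈ [N], n' ∈ [N']} a(n,n')` tend to `0` as `N, N' → ∞`. -/
theorem cesaro_from_short_intervals (a : ℕ → ℕ → ℂ) (C : ℝ) (hC : ∀ n n', ‖a n n'‖ ≤ C)
    (L L' : ℕ → ℕ) (hL0 : ∀ N, 0 < L N) (hL'0 : ∀ N, 0 < L' N)
    (hL : Tendsto (fun N => (L N : ℝ) / N) atTop (nhds 0))
    (hL' : Tendsto (fun N => (L' N : ℝ) / N) atTop (nhds 0))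
    (h : Tendsto (fun p : ℕ × ℕ =>
        ((L p.1 : ℂ) * (L' p.2 : ℂ))⁻¹ *
          ∑ n ∈ Finset.Ioc p.1 (p.1 + L p.1), ∑ n' ∈ Finset.Ioc p.2 (p.2 + L' p.2), a n n')
      (atTop ×ˢ atTop) (nhds 0)) :
    Tendsto (fun p : ℕ × ℕ =>
        ((p.1 : ℂ) * (p.2 : ℂ))⁻¹ *
          ∑ n ∈ Finset.Icc 1 p.1, ∑ n' ∈ Finset.Icc 1 p.2, a n n')
      (atTop ×ˢ atTop) (nhds 0) := by
  have hbox : ∀ ε > 0, ∀ᶠ p : ℕ × ℕ in atTop ×ˢ atTop,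
      ‖∑ n ∈ Ioc p.1 (p.1 + L p.1), ∑ n' ∈ Ioc p.2 (p.2 + L' p.2), a n n'‖ ≤
        ε * (L p.1 * L' p.2) := by
    intro ε hε
    filter_upwards [NormedAddGroup.tendsto_nhds_zero.1 h ε hε] with p hp
    have hLL : (L p.1 : ℂ) * L' p.2 ≠ 0 :=
      mul_ne_zero (Nat.cast_ne_zero.2 (hL0 p.1).ne') (Nat.cast_ne_zero.2 (hL'0 p.2).ne')
    rw [← mul_inv_cancel_left₀ hLL (∑ n ∈ _, _), norm_mul]
    simpa [mul_comm ε] using mul_le_mul_of_nonneg_left hp.le (norm_nonneg ((L p.1 : ℂ) * L' p.2))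
  refine NormedAddGroup.tendsto_nhds_zero.2 fun η hη => ?_
  filter_upwards [eventually_norm_sum_Ioc_lt hC hL0 hL'0 hL hL' hbox hη] with p hp
  have hpos : (0 : ℝ) < p.1 * p.2 := pos_of_mul_pos_right ((norm_nonneg _).trans_lt hp) hη.le
  rw [norm_mul, norm_inv, norm_mul, Complex.norm_natCast, Complex.norm_natCast,
    inv_mul_lt_iff₀ hpos, mul_comm]
  exact hp
end

section
/- Let X, K be Polish spaces and F : X × K → ℝ≥0 a bounded Borel function. Suppose for every x ∈ X the set P_x = {y ∈ K : F(x,y) > 0} is countable and Σ(x) = Σ_{y ∈ P_x} F(x,y) < ∞. Define S(x) = sup_{y ∈ K} F(x,y). Then there exists a Borel map t : X → K such that F(x, t(x)) = S(x) for every x ∈ X. -/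
/-!
Since `F (x, ·)` is summable, each of its superlevel sets `{y | q ≤ F (x, y)}` with `q > 0` is
finite, so `F (x, ·)` attains its supremum, and the set `M` of positive maximizers has finite
sections; where `M` has an empty section, `F (x, ·)` vanishes identically. `M` is Borel: inside
`{F > 0}` its complement is the projection of the Borel set `{(p, y) | 0 < F p < F (p.1, y)}`,
whose sections are again finite. So it suffices to show that a Borel set `A ⊆ X × Y` with finite
sections has a Borel projection and a Borel uniformization.

Such an `A` is a countable union of Borel graphs. If `(b n)` is a countable basis of `Y`, the set
`Dₙ` of points of `A` that `b n` does not isolate in their section is analytic, and every point of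
`A` escapes some `Dₙ` because its section is finite. Novikov's separation theorem gives Borel
`Cₙ ⊇ Dₙ` with empty intersection, and the `A \ Cₙ` are Borel graphs covering `A`. By the
Lusin–Souslin theorem their projections are Borel, and choosing over each `x` the point of the first
graph above `x` is a Borel map. Novikov's theorem is proved like Lusin's separation theorem for two
sets: if the ranges of `fₙ : ℕ^ℕ → α` were not separable, one could refine cylinders indefinitely
while keeping their images non-separable, and the limit points would have a common image lying
in every range.
-/

open Set Function Filter Topology PiNat

section Separation

variable {α : Type*} [MeasurableSpace α]

def MeasurablySeparableFamily {ι : Type*} (s : ι → Set α) : Prop :=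
  ∃ u : ι → Set α, (∀ i, s i ⊆ u i) ∧ ⋂ i, u i = ∅ ∧ ∀ i, MeasurableSet (u i)

theorem MeasurablySeparableFamily.of_subset_of_disjoint {ι : Type*} [DecidableEq ι]
    {s : ι → Set α} {i j : ι} (hij : i ≠ j) {u v : Set α} (hsu : s i ⊆ u) (hsv : s j ⊆ v)
    (huv : Disjoint u v) (hu : MeasurableSet u) (hv : MeasurableSet v) :
    MeasurablySeparableFamily s := by
  refine ⟨fun k => if k = i then u else if k = j then v else univ, fun k => ?_, ?_, fun k => ?_⟩
  · dsimp only
    split_ifs with hi hj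
    exacts [hi ▸ hsu, hj ▸ hsv, subset_univ _]
  · refine eq_empty_of_forall_notMem fun x hx => huv.notMem_of_mem_left (a := x) ?_ ?_
    · simpa using mem_iInter.1 hx i
    · simpa [hij.symm] using mem_iInter.1 hx j
  · dsimp only
    split_ifs
    exacts [hu, hv, MeasurableSet.univ]

theorem MeasurablySeparableFamily.update_iUnion {ι κ : Type*} [DecidableEq ι] [Countable κ]
    {s : ι → Set α} {i₀ : ι} {t : κ → Set α}
    (h : ∀ k, MeasurablySeparableFamily (update s i₀ (t k))) :
    MeasurablySeparableFamily (update s i₀ (⋃ k, t k)) := by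
  choose u hsu hu hmeas using h
  refine ⟨fun i => if i = i₀ then ⋃ k, u k i₀ else ⋂ k, u k i, fun i => ?_, ?_, fun i => ?_⟩
  · rcases eq_or_ne i i₀ with rfl | hi
    · simpa using iUnion_mono fun k => by simpa using hsu k i
    · simpa [hi] using subset_iInter fun k => by simpa [hi] using hsu k i
  · refine eq_empty_of_forall_notMem fun x hx => ?_
    obtain ⟨k, hk⟩ := mem_iUnion.1 (by simpa using mem_iInter.1 hx i₀)
    refine eq_empty_iff_forall_notMem.1 (hu k) x (mem_iInter.2 fun i => ?_)
    rcases eq_or_ne i i₀ with rfl | hi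
    · exact hk
    · simpa [hi] using mem_iInter.1 (by simpa [hi] using mem_iInter.1 hx i) k
  · dsimp only
    split_ifs
    exacts [.iUnion fun k => hmeas k i₀, .iInter fun k => hmeas k i]

theorem exists_not_measurablySeparableFamily_piecewise {ι κ : Type*} [DecidableEq ι]
    [Countable κ] [Nonempty κ] {s : ι → Set α} {t : ι → κ → Set α} (N : Finset ι)
    (hst : ∀ i ∈ N, s i = ⋃ k, t i k) (hs : ¬ MeasurablySeparableFamily s) :
    ∃ c : ι → κ, ¬ MeasurablySeparableFamily fun i => if i ∈ N then t i (c i) else s i := by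
  induction N using Finset.induction_on with
  | empty => exact ⟨fun _ => Classical.arbitrary κ, by simpa using hs⟩
  | insert a N ha ih =>
    obtain ⟨c, hc⟩ := ih fun i hi => hst i (Finset.mem_insert_of_mem hi)
    set s' := fun i => if i ∈ N then t i (c i) else s i
    have hs'a : update s' a (⋃ k, t a k) = s' := by
      rw [← hst a (Finset.mem_insert_self a N)]
      exact update_eq_self_iff.2 (by simp [s', ha])
    obtain ⟨k, hk⟩ : ∃ k, ¬ MeasurablySeparableFamily (update s' a (t a k)) := by
      by_contra! H
      exact hc (hs'a ▸ MeasurablySeparableFamily.update_iUnion H)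
    refine ⟨update c a k, ?_⟩
    convert hk using 2
    funext i
    rcases eq_or_ne i a with rfl | hi
    · simp
    · simp [hi, s']

theorem exists_cylinder_succ_not_measurablySeparableFamily (f : ℕ → (ℕ → ℕ) → α) {k : ℕ}
    {x : ℕ → ℕ → ℕ} (h : ¬ MeasurablySeparableFamily fun n => f n '' cylinder (x n) (k - n)) :
    ∃ x' : ℕ → ℕ → ℕ, (∀ n, x' n ∈ cylinder (x n) (k - n)) ∧
      ¬ MeasurablySeparableFamily fun n => f n '' cylinder (x' n) (k + 1 - n) := by
  obtain ⟨c, hc⟩ := exists_not_measurablySeparableFamily_piecewise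
    (t := fun n i => f n '' cylinder (update (x n) (k - n) i) (k - n + 1)) (Finset.range (k + 1))
    (fun n _ => by rw [← image_iUnion]; exact congrArg _ (iUnion_cylinder_update _ _).symm) h
  refine ⟨fun n => update (x n) (k - n) (c n), fun n => update_mem_cylinder _ _ _, ?_⟩
  convert hc using 2
  funext n
  split_ifs with hn
  · rw [Finset.mem_range] at hn
    rw [show k + 1 - n = k - n + 1 by omega]
  · rw [Finset.mem_range] at hn
    rw [show k + 1 - n = 0 by omega, show k - n = 0 by omega, cylinder_zero, cylinder_zero]

theorem Continuous.eventually_image_cylinder_subset {β : Type*} [TopologicalSpace β]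
    {f : (ℕ → ℕ) → β} (hf : Continuous f) (z : ℕ → ℕ) {U : Set β} (hU : IsOpen U)
    (hz : f z ∈ U) : ∀ᶠ l in atTop, f '' cylinder z l ⊆ U := by
  obtain ⟨_, ⟨y, n, rfl⟩, hzy, hyU⟩ :=
    (isTopologicalBasis_cylinders fun _ => ℕ).exists_subset_of_mem_open hz (hU.preimage hf)
  filter_upwards [eventually_ge_atTop n] with l hl
  rw [image_subset_iff, ← mem_cylinder_iff_eq.1 hzy] at *
  exact (cylinder_anti z hl).trans hyU

theorem measurablySeparableFamily_range [TopologicalSpace α] [T2Space α]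
    [OpensMeasurableSpace α] {f : ℕ → (ℕ → ℕ) → α} (hf : ∀ n, Continuous (f n))
    (h : ⋂ n, range (f n) = ∅) : MeasurablySeparableFamily fun n => range (f n) := by
  by_contra hsep
  choose! g hg_mem hg_sep using
    fun k x => exists_cylinder_succ_not_measurablySeparableFamily f (k := k) (x := x)
  -- `p k n` is the centre of a cylinder of length `k - n`; `z n` is the limit of the `p k n`.
  let p : ℕ → ℕ → ℕ → ℕ := fun k => Nat.rec (fun _ _ => 0) g k
  have hp : ∀ k, ¬ MeasurablySeparableFamily fun n => f n '' cylinder (p k n) (k - n) := by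
    intro k
    induction k with
    | zero => simpa [cylinder_zero, image_univ] using hsep
    | succ k ih => exact hg_sep k (p k) ih
  have hagree : ∀ k k', k ≤ k' → ∀ n, p k' n ∈ cylinder (p k n) (k - n) := by
    intro k k' hkk' n
    induction k', hkk' using Nat.le_induction with
    | base => exact self_mem_cylinder _ _
    | succ k' _ ih =>
      rw [mem_cylinder_iff_eq] at ih ⊢
      rw [← ih, ← mem_cylinder_iff_eq]
      exact cylinder_anti _ (by omega : k - n ≤ k' - n) (hg_mem k' (p k') (hp k') n)
  set z : ℕ → ℕ → ℕ := fun n j => p (n + j + 1) n j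
  have hz : ∀ k n, cylinder (z n) (k - n) = cylinder (p k n) (k - n) := by
    intro k n
    rw [← mem_cylinder_iff_eq, mem_cylinder_iff]
    intro j hj
    have h1 := mem_cylinder_iff.1 (hagree k _ (le_max_left k (n + j + 1)) n) j hj
    have h2 := mem_cylinder_iff.1 (hagree (n + j + 1) _ (le_max_right k _) n) j (by omega)
    exact h2.symm.trans h1
  have hconst : ∀ n, f n (z n) = f 0 (z 0) := by
    intro n
    by_contra hne
    have hn : n ≠ 0 := by rintro rfl; exact hne rfl
    obtain ⟨U, V, hU, hV, hzU, hzV, hUV⟩ := t2_separation hne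
    obtain ⟨L, hL⟩ := eventually_atTop.1 <|
      ((hf n).eventually_image_cylinder_subset (z n) hU hzU).and
        ((hf 0).eventually_image_cylinder_subset (z 0) hV hzV)
    refine hp (L + n) (.of_subset_of_disjoint hn ?_ ?_ hUV hU.measurableSet hV.measurableSet)
    · exact hz (L + n) n ▸ (hL _ (by omega)).1
    · exact hz (L + n) 0 ▸ (hL _ (by omega)).2
  exact eq_empty_iff_forall_notMem.1 h (f 0 (z 0))
    (mem_iInter.2 fun n => hconst n ▸ mem_range_self _)

open MeasureTheory in
theorem measurablySeparableFamily_of_analyticSet [TopologicalSpace α] [T2Space α]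
    [OpensMeasurableSpace α] {s : ℕ → Set α} (hs : ∀ n, AnalyticSet (s n))
    (h : ⋂ n, s n = ∅) : MeasurablySeparableFamily s := by
  by_cases! h0 : ∃ n, s n = ∅
  · obtain ⟨n, hn⟩ := h0
    refine ⟨update (fun _ => univ) n ∅, fun i => ?_, ?_, fun i => ?_⟩
    · rcases eq_or_ne i n with rfl | hi <;> simp [*]
    · exact eq_empty_of_subset_empty fun x hx => by simpa using mem_iInter.1 hx n
    · rcases eq_or_ne i n with rfl | hi <;> simp [*]
  · simp_rw [AnalyticSet] at hs
    choose f hfc hfr using fun n => (hs n).resolve_left (h0 n).ne_empty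
    obtain rfl : s = fun n => range (f n) := funext fun n => (hfr n).symm
    exact measurablySeparableFamily_range hfc h

end Separation

section FiniteSections

open MeasureTheory

variable {X Y : Type*} [TopologicalSpace X] [PolishSpace X] [MeasurableSpace X] [BorelSpace X]
  [TopologicalSpace Y] [PolishSpace Y] [MeasurableSpace Y] [BorelSpace Y]

theorem MeasurableSet.image_fst_of_subsingleton_sections {H : Set (X × Y)}
    (hH : MeasurableSet H) (hs : ∀ x, (Prod.mk x ⁻¹' H).Subsingleton) :
    MeasurableSet (Prod.fst '' H) :=
  hH.image_of_continuousOn_injOn continuous_fst.continuousOn fun p hp q hq hpq =>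
    Prod.ext hpq (hs p.1 (show (p.1, p.2) ∈ H from hp) (show (p.1, q.2) ∈ H from hpq ▸ hq))

theorem MeasurableSet.exists_iUnion_eq_of_finite_sections {A : Set (X × Y)}
    (hA : MeasurableSet A) (hfin : ∀ x, (Prod.mk x ⁻¹' A).Finite) :
    ∃ H : ℕ → Set (X × Y), (∀ n, MeasurableSet (H n)) ∧
      (∀ n x, (Prod.mk x ⁻¹' H n).Subsingleton) ∧ ⋃ n, H n = A := by
  obtain ⟨b, hb⟩ := TopologicalSpace.exists_seq_basis Y
  -- `Prod.fst '' bad n` is the set of points of `A` that `b n` does not isolate in their section.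
  let bad : ℕ → Set ((X × Y) × Y) := fun n =>
    {q | q.1 ∈ A ∧ (q.1.2 ∉ b n ∨ q.2 ∈ b n ∧ q.2 ≠ q.1.2 ∧ (q.1.1, q.2) ∈ A)}
  have hbad : ∀ n, MeasurableSet (bad n) := fun n => by
    have := (hb.isOpen (mem_range_self n)).measurableSet
    measurability
  have hisolated : ⋂ n, Prod.fst '' bad n = ∅ := by
    refine eq_empty_of_forall_notMem fun p hp => ?_
    obtain ⟨q, ⟨hpA, -⟩, rfl⟩ := mem_iInter.1 hp 0
    obtain ⟨_, ⟨n, rfl⟩, hqn, hnA⟩ := hb.exists_subset_of_mem_open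
      (a := q.1.2) (u := (Prod.mk q.1.1 ⁻¹' A \ {q.1.2})ᶜ) (by simp)
      (hfin _).sdiff.isClosed.isOpen_compl
    obtain ⟨r, ⟨-, hr⟩, hrq⟩ := mem_iInter.1 hp n
    rw [hrq] at hr
    rcases hr with hr | ⟨hrb, hne, hrA⟩
    exacts [hr hqn, hnA hrb ⟨hrA, hne⟩]
  obtain ⟨u, hsu, hu, hmeas⟩ := measurablySeparableFamily_of_analyticSet
    (fun n => (hbad n).analyticSet.image_of_continuous continuous_fst) hisolated
  refine ⟨fun n => A \ u n, fun n => hA.diff (hmeas n), fun n x y hy y' hy' => ?_,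
    by rw [← sdiff_iInter, hu, sdiff_empty]⟩
  have hgood : ∀ {y}, (x, y) ∈ A \ u n → y ∈ b n ∧ ∀ z ∈ b n, (x, z) ∈ A → z = y :=
    fun {y} hy => by
      have : ∀ z, ((x, y), z) ∉ bad n := fun z hz => hy.2 (hsu n ⟨_, hz, rfl⟩)
      simp only [bad, mem_ofPred_eq, hy.1, true_and, not_or, not_not, not_and] at this
      exact ⟨(this y).1, fun z hz hzA => by_contra fun hne => (this z).2 hz hne hzA⟩
  exact ((hgood hy).2 y' (hgood hy').1 hy'.1).symm

theorem MeasurableSet.exists_measurable_mem_of_subsingleton_sections [Nonempty Y]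
    {H : Set (X × Y)} (hH : MeasurableSet H) (hs : ∀ x, (Prod.mk x ⁻¹' H).Subsingleton) :
    ∃ t : X → Y, Measurable t ∧ ∀ x y, (x, y) ∈ H → (x, t x) ∈ H := by
  classical
  let t : X → Y := fun x => if h : ∃ y, (x, y) ∈ H then h.choose else Classical.arbitrary Y
  have ht : ∀ x y, (x, y) ∈ H → t x = y := fun x y hy => by
    have h : ∃ y, (x, y) ∈ H := ⟨y, hy⟩
    simp only [t, dif_pos h]
    exact hs x h.choose_spec hy
  refine ⟨t, fun U hU => ?_, fun x y hy => ht x y hy ▸ hy⟩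
  have hpre : t ⁻¹' U = Prod.fst '' (H ∩ Prod.snd ⁻¹' U) ∪
      (Prod.fst '' H)ᶜ ∩ {_x | Classical.arbitrary Y ∈ U} := by
    ext x
    by_cases h : ∃ y, (x, y) ∈ H
    · obtain ⟨y, hy⟩ := h
      rw [mem_preimage, ht x y hy]
      constructor
      · exact fun hyU => Or.inl ⟨(x, y), ⟨hy, hyU⟩, rfl⟩
      · rintro (⟨⟨_, y'⟩, ⟨hy', hy'U⟩, rfl⟩ | ⟨hx, -⟩)
        · exact hs _ hy' hy ▸ hy'U
        · exact absurd ⟨(x, y), hy, rfl⟩ hx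
    · simp only [not_exists] at h
      simp [t, h]
  rw [hpre]
  exact ((hH.inter (measurable_snd hU)).image_fst_of_subsingleton_sections
    fun x => (hs x).anti fun y hy => hy.1).union
      ((hH.image_fst_of_subsingleton_sections hs).compl.inter (.const _))

theorem MeasurableSet.image_fst_of_finite_sections {A : Set (X × Y)} (hA : MeasurableSet A)
    (hfin : ∀ x, (Prod.mk x ⁻¹' A).Finite) : MeasurableSet (Prod.fst '' A) := by
  obtain ⟨H, hH, hs, rfl⟩ := hA.exists_iUnion_eq_of_finite_sections hfin
  rw [image_iUnion]
  exact .iUnion fun n => (hH n).image_fst_of_subsingleton_sections (hs n)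

theorem MeasurableSet.exists_measurable_mem_of_finite_sections [Nonempty Y] {A : Set (X × Y)}
    (hA : MeasurableSet A) (hfin : ∀ x, (Prod.mk x ⁻¹' A).Finite) :
    ∃ t : X → Y, Measurable t ∧ ∀ x y, (x, y) ∈ A → (x, t x) ∈ A := by
  obtain ⟨H, hH, hs, rfl⟩ := hA.exists_iUnion_eq_of_finite_sections hfin
  let D : ℕ → Set X := disjointed fun n => Prod.fst '' H n
  have hD : ∀ n, MeasurableSet (D n) :=
    .disjointed fun n => (hH n).image_fst_of_subsingleton_sections (hs n)
  let G := ⋃ n, H n ∩ Prod.fst ⁻¹' D n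
  have hGs : ∀ x, (Prod.mk x ⁻¹' G).Subsingleton := by
    intro x y hy y' hy'
    obtain ⟨n, hyn, hxn⟩ := mem_iUnion.1 hy
    obtain ⟨m, hym, hxm⟩ := mem_iUnion.1 hy'
    obtain rfl : n = m := by_contra fun hnm =>
      (disjoint_disjointed (fun n => Prod.fst '' H n) hnm).notMem_of_mem_left (a := x) hxn hxm
    exact hs n x hyn hym
  obtain ⟨t, ht, htG⟩ := (MeasurableSet.iUnion fun n => (hH n).inter (measurable_fst (hD n)))
    |>.exists_measurable_mem_of_subsingleton_sections hGs
  refine ⟨t, ht, fun x y hy => ?_⟩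
  have hx : x ∈ ⋃ n, D n := by
    rw [iUnion_disjointed, ← image_iUnion]
    exact ⟨(x, y), hy, rfl⟩
  obtain ⟨n, hxn⟩ := mem_iUnion.1 hx
  obtain ⟨⟨_, y'⟩, hy', rfl⟩ := disjointed_subset _ n hxn
  exact iUnion_mono (fun n => inter_subset_left) (htG _ y' (mem_iUnion_of_mem n ⟨hy', hxn⟩))

end FiniteSections

section Maximizers

theorem Filter.Tendsto.finite_setOf_le {β : Type*} {f : β → ℝ} (h : Tendsto f cofinite (𝓝 0))
    {q : ℝ} (hq : 0 < q) : {y | q ≤ f y}.Finite := by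
  simpa only [not_lt] using eventually_cofinite.1 (h.eventually (gt_mem_nhds hq))

theorem Filter.Tendsto.exists_forall_le_of_nonneg {β : Type*} [Nonempty β] {f : β → ℝ}
    (h : Tendsto f cofinite (𝓝 0)) (hf0 : ∀ y, 0 ≤ f y) : ∃ y₀, ∀ y, f y ≤ f y₀ := by
  by_cases! hpos : ∃ y₁, 0 < f y₁
  · obtain ⟨y₁, hy₁⟩ := hpos
    obtain ⟨y₀, hy₀, hmax⟩ := exists_max_image _ f (h.finite_setOf_le hy₁) ⟨y₁, le_refl (f y₁)⟩
    refine ⟨y₀, fun y => ?_⟩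
    rcases le_or_gt (f y₁) (f y) with hy | hy
    exacts [hmax y hy, hy.le.trans hy₀]
  · exact ⟨Classical.arbitrary β, fun y => (hpos y).trans (hf0 _)⟩

def positiveMaximizers {X Y : Type*} (F : X × Y → ℝ) : Set (X × Y) :=
  {p | 0 < F p ∧ ∀ y, F (p.1, y) ≤ F p}

theorem finite_positiveMaximizers_sections {X Y : Type*} {F : X × Y → ℝ}
    (hlim : ∀ x, Tendsto (fun y => F (x, y)) cofinite (𝓝 0)) (x : X) :
    (Prod.mk x ⁻¹' positiveMaximizers F).Finite := by
  rcases eq_empty_or_nonempty (Prod.mk x ⁻¹' positiveMaximizers F) with h | ⟨y₀, hy₀, -⟩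
  · exact h ▸ finite_empty
  · exact ((hlim x).finite_setOf_le hy₀).subset fun y hy => hy.2 y₀

variable {X Y : Type*} [TopologicalSpace X] [PolishSpace X] [MeasurableSpace X] [BorelSpace X]
  [TopologicalSpace Y] [PolishSpace Y] [MeasurableSpace Y] [BorelSpace Y] {F : X × Y → ℝ}

theorem measurableSet_positiveMaximizers (hF : Measurable F)
    (hlim : ∀ x, Tendsto (fun y => F (x, y)) cofinite (𝓝 0)) :
    MeasurableSet (positiveMaximizers F) := by
  let E : Set ((X × Y) × Y) := {q | 0 < F q.1 ∧ F q.1 < F (q.1.1, q.2)}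
  have hE : MeasurableSet E :=
    (measurableSet_lt measurable_const (hF.comp measurable_fst)).inter
      (measurableSet_lt (hF.comp measurable_fst)
        (hF.comp (measurable_fst.fst.prodMk measurable_snd)))
  have hEfin : ∀ p, (Prod.mk p ⁻¹' E).Finite := fun p => by
    by_cases hp : 0 < F p
    · exact ((hlim p.1).finite_setOf_le hp).subset fun y hy => hy.2.le
    · exact finite_empty.subset fun y hy => hp hy.1
  have hM : positiveMaximizers F = {p | 0 < F p} \ Prod.fst '' E := by
    ext p
    simp +contextual [positiveMaximizers, E]
  rw [hM]
  exact (measurableSet_lt measurable_const hF).diff (hE.image_fst_of_finite_sections hEfin)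

theorem exists_measurable_forall_le [Nonempty Y] (hF : Measurable F) (hF0 : ∀ p, 0 ≤ F p)
    (hlim : ∀ x, Tendsto (fun y => F (x, y)) cofinite (𝓝 0)) :
    ∃ t : X → Y, Measurable t ∧ ∀ x y, F (x, y) ≤ F (x, t x) := by
  obtain ⟨t, ht, htM⟩ := (measurableSet_positiveMaximizers hF hlim)
    |>.exists_measurable_mem_of_finite_sections (finite_positiveMaximizers_sections hlim)
  refine ⟨t, ht, fun x y => ?_⟩
  obtain ⟨y₀, hy₀⟩ := (hlim x).exists_forall_le_of_nonneg fun y => hF0 (x, y)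
  rcases lt_or_ge 0 (F (x, y₀)) with hpos | hnonpos
  · exact (htM x y₀ ⟨hpos, hy₀⟩).2 y
  · exact (hy₀ y).trans (hnonpos.trans (hF0 _))

end Maximizers

theorem borel_selection_of_sup_general (X K : Type*)
    [TopologicalSpace X] [PolishSpace X] [MeasurableSpace X] [BorelSpace X]
    [TopologicalSpace K] [PolishSpace K] [MeasurableSpace K] [BorelSpace K] [Nonempty K]
    (F : X × K → ℝ) (hFmeas : Measurable F) (hF0 : ∀ p, 0 ≤ F p)
    (hsum : ∀ x : X, Summable fun y : K => F (x, y)) :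
    ∃ t : X → K, Measurable t ∧ ∀ x : X, F (x, t x) = ⨆ y : K, F (x, y) := by
  obtain ⟨t, ht, hmax⟩ :=
    exists_measurable_forall_le hFmeas hF0 fun x => (hsum x).tendsto_cofinite_zero
  exact ⟨t, ht, fun x =>
    (ciSup_eq_of_forall_le_of_forall_lt_exists_gt (hmax x) fun _ hw => ⟨t x, hw⟩).symm⟩

/-- Borel selection of the supremum: let `X, K` be Polish spaces and `F : X × K → ℝ` a bounded
nonnegative Borel function such that for every `x` the set `{y : F(x,y) > 0}` is countable and
`∑_y F(x,y) < ∞` (summability). Then there is a Borel map `t : X → K` with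
`F(x, t x) = sup_y F(x,y)` for every `x`. -/
theorem borel_selection_of_sup (X K : Type*)
    [TopologicalSpace X] [PolishSpace X] [MeasurableSpace X] [BorelSpace X]
    [TopologicalSpace K] [PolishSpace K] [MeasurableSpace K] [BorelSpace K] [Nonempty K]
    (F : X × K → ℝ) (hFmeas : Measurable F) (hF0 : ∀ p, 0 ≤ F p)
    (C : ℝ) (hFbdd : ∀ p, F p ≤ C)
    (hcount : ∀ x : X, {y : K | 0 < F (x, y)}.Countable)
    (hsum : ∀ x : X, Summable fun y : K => F (x, y)) :
    ∃ t : X → K, Measurable t ∧ ∀ x : X, F (x, t x) = ⨆ y : K, F (x, y) :=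
  borel_selection_of_sup_general X K F hFmeas hF0 hsum
end

section
/- Let (X, μ, T) be a measure-preserving system on a probability space, let I(T) be the σ-algebra of T-invariant sets, and let φ_j, φ_k ∈ L^∞(μ) be eigenfunctions with T-invariant eigenvalues λ_j, λ_k ∈ L^∞(μ), meaning: |φ| takes only values 0 or 1 a.e., λ = 0 a.e. on {φ = 0}, and φ∘T = λ·φ a.e. Suppose E_μ(φ_j · conj(φ_k) | I(T)) = 0 a.e. and E_μ(|φ_j|² | I(T)), E_μ(|φ_k|² | I(T)) take only values 0 or 1 a.e. Then for μ-a.e. x ∈ X, λ_j(x) · conj(λ_k(x)) ≠ 1. -/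
/-!
On `D = {λⱼ · conj λₖ = 1}` the function `f = φⱼ · conj φₖ` satisfies `f ∘ T = f`, and `D` is
invariant (both a.e.). Hence `1_D f` is a.e. equal to an `I(T)`-measurable function, so it equals
its conditional expectation `1_D E(f | I(T)) = 0`. Thus on `D` one of `φⱼ, φₖ` vanishes, and with
it the corresponding eigenvalue, which contradicts `λⱼ · conj λₖ = 1`.
-/

open MeasureTheory

/-- The σ-algebra of `T`-invariant measurable sets. -/
def invSigma {X : Type*} [MeasurableSpace X] (T : X → X) : MeasurableSpace X where
  MeasurableSet' s := MeasurableSet s ∧ T ⁻¹' s = s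
  measurableSet_empty := ⟨MeasurableSet.empty, Set.preimage_empty⟩
  measurableSet_compl := fun s hs => ⟨hs.1.compl, by rw [Set.preimage_compl, hs.2]⟩
  measurableSet_iUnion := fun f hf =>
    ⟨MeasurableSet.iUnion fun i => (hf i).1, by
      rw [Set.preimage_iUnion]; exact Set.iUnion_congr fun i => (hf i).2⟩

open Filter

theorem Filter.limUnder_atTop_comp_add_one {α : Type*} [TopologicalSpace α] [Nonempty α]
    (u : ℕ → α) : limUnder atTop (fun n => u (n + 1)) = limUnder atTop u := by
  rw [limUnder, ← Function.comp_def u, ← map_map, map_add_atTop_eq_nat, limUnder]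

namespace MeasureTheory.Measure.QuasiMeasurePreserving

variable {X E : Type*} [MeasurableSpace X] {μ : Measure X} {T : X → X}

theorem comp_iterate_ae_eq (hT : QuasiMeasurePreserving T μ μ) {g : X → E}
    (hg : g ∘ T =ᵐ[μ] g) (n : ℕ) : g ∘ T^[n] =ᵐ[μ] g := by
  induction n with
  | zero => rfl
  | succ n ih =>
    rw [Function.iterate_succ, ← Function.comp_assoc]
    exact (hT.ae_eq_comp ih).trans hg

/-- An a.e. `T`-invariant function agrees a.e. with the limit along its `T`-orbits, which is
strictly `T`-invariant. -/
theorem aestronglyMeasurable_invariants [TopologicalSpace E]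
    [TopologicalSpace.IsCompletelyMetrizableSpace E] [Nonempty E]
    (hT : QuasiMeasurePreserving T μ μ) {g : X → E} (hg : AEStronglyMeasurable g μ)
    (hgT : g ∘ T =ᵐ[μ] g) : AEStronglyMeasurable[MeasurableSpace.invariants T] g μ := by
  borelize E
  obtain ⟨g₀, hg₀, hgg₀⟩ := hg
  have hg₀T : g₀ ∘ T =ᵐ[μ] g₀ := (hT.ae_eq_comp hgg₀.symm).trans (hgT.trans hgg₀)
  set g' : X → E := fun x => limUnder atTop (fun n => g₀ (T^[n] x))
  have hg'_meas : StronglyMeasurable g' :=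
    StronglyMeasurable.limUnder fun n => hg₀.comp_measurable (hT.measurable.iterate n)
  have hg'T : g' ∘ T = g' := by
    ext x
    simp only [g', Function.comp_apply, ← Function.iterate_succ_apply]
    exact limUnder_atTop_comp_add_one (fun n => g₀ (T^[n] x))
  have hg'_eq : g =ᵐ[μ] g' := by
    filter_upwards [hgg₀, ae_all_iff.2 (hT.comp_iterate_ae_eq hg₀T)] with x hx hxn
    simp only [g', Function.comp_apply] at hxn ⊢
    simp only [hx, hxn, tendsto_const_nhds.limUnder_eq]
  refine ⟨g', ?_, hg'_eq⟩
  rw [stronglyMeasurable_iff_measurable_separable] at hg'_meas ⊢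
  exact ⟨MeasurableSpace.measurable_invariants_dom.2 ⟨hg'_meas.1, fun s _ => by rw [hg'T]⟩,
    hg'_meas.2⟩

theorem condExp_invariants_ae_eq [IsFiniteMeasure μ] [NormedAddCommGroup E] [NormedSpace ℝ E]
    [CompleteSpace E] (hT : QuasiMeasurePreserving T μ μ) {g : X → E} (hg : Integrable g μ)
    (hgT : g ∘ T =ᵐ[μ] g) : μ[g | MeasurableSpace.invariants T] =ᵐ[μ] g :=
  condExp_of_aestronglyMeasurable' (MeasurableSpace.invariants_le T)
    (hT.aestronglyMeasurable_invariants hg.1 hgT) hg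

theorem ae_eq_zero_of_eigenvalue_eq_one {𝕜 : Type*} [RCLike 𝕜] [IsFiniteMeasure μ]
    (hT : QuasiMeasurePreserving T μ μ) {f h : X → 𝕜} (hf : Integrable f μ) (hh : Measurable h)
    (hhT : ∀ᵐ x ∂μ, h (T x) = h x) (hfT : ∀ᵐ x ∂μ, f (T x) = h x * f x)
    (hf0 : μ[f | MeasurableSpace.invariants T] =ᵐ[μ] 0) : ∀ᵐ x ∂μ, h x = 1 → f x = 0 := by
  set D : Set X := {x | h x = 1}
  set u : X → ℝ := D.indicator 1
  have hD_inv : ∀ᵐ x ∂μ, T x ∈ D ↔ x ∈ D := by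
    filter_upwards [hhT] with x hx
    change h (T x) = 1 ↔ h x = 1
    rw [hx]
  have hD_meas : MeasurableSet D := measurableSet_eq_fun hh measurable_const
  have hu_meas : AEStronglyMeasurable u μ :=
    (stronglyMeasurable_const.indicator hD_meas).aestronglyMeasurable
  have hu_inv : u ∘ T =ᵐ[μ] u := by
    filter_upwards [hD_inv] with x hx
    simp only [u, Function.comp_apply, Set.indicator_apply, hx, Pi.one_apply]
  have huf_inv : (u • f) ∘ T =ᵐ[μ] u • f := by
    filter_upwards [hD_inv, hfT] with x hx hfx
    change u (T x) • f (T x) = u x • f x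
    by_cases hxD : x ∈ D
    · simp only [u, Set.indicator_of_mem hxD, Set.indicator_of_mem (hx.2 hxD), hfx, hxD.out,
        Pi.one_apply, one_mul]
    · simp only [u, Set.indicator_of_notMem hxD, Set.indicator_of_notMem (mt hx.1 hxD), zero_smul]
  have huf_int : Integrable (u • f) μ :=
    hf.bdd_smul 1 hu_meas
      (.of_forall fun x => (norm_indicator_le_norm_self _ _).trans_eq (by simp))
  have huf_zero : u • f =ᵐ[μ] 0 := calc
    u • f =ᵐ[μ] μ[u • f | MeasurableSpace.invariants T] :=
      (hT.condExp_invariants_ae_eq huf_int huf_inv).symm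
    _ =ᵐ[μ] u • μ[f | MeasurableSpace.invariants T] :=
      condExp_smul_of_aestronglyMeasurable_left (hT.aestronglyMeasurable_invariants hu_meas hu_inv)
        huf_int hf
    _ =ᵐ[μ] 0 := by
      filter_upwards [hf0] with x hx
      simp [hx]
  filter_upwards [huf_zero] with x hx hxD
  simpa [u, Set.indicator_of_mem (show x ∈ D from hxD)] using hx

end MeasureTheory.Measure.QuasiMeasurePreserving

theorem eigenvalues_ae_distinct_general {X : Type*} [MeasurableSpace X] (μ : Measure X)
    [IsProbabilityMeasure μ] (T : X → X) (hT : MeasurePreserving T μ μ)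
    (φj φk lamj lamk : X → ℂ)
    (hφjm : Measurable φj) (hφkm : Measurable φk)
    (hlamjm : Measurable lamj) (hlamkm : Measurable lamk)
    (hφjbdd : ∃ C, ∀ x, ‖φj x‖ ≤ C) (hφkbdd : ∃ C, ∀ x, ‖φk x‖ ≤ C)
    -- `φj` is an eigenfunction with `T`-invariant eigenvalue `lamj`:
    (hzeroj : ∀ᵐ x ∂μ, φj x = 0 → lamj x = 0)
    (hlamjinv : ∀ᵐ x ∂μ, lamj (T x) = lamj x)
    (heigj : ∀ᵐ x ∂μ, φj (T x) = lamj x * φj x)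
    -- `φk` is an eigenfunction with `T`-invariant eigenvalue `lamk`:
    (hzerok : ∀ᵐ x ∂μ, φk x = 0 → lamk x = 0)
    (hlamkinv : ∀ᵐ x ∂μ, lamk (T x) = lamk x)
    (heigk : ∀ᵐ x ∂μ, φk (T x) = lamk x * φk x)
    -- relative orthonormality over the invariant σ-algebra:
    (horth : MeasureTheory.condExp (invSigma T) μ (fun x => φj x * (starRingEnd ℂ) (φk x)) =ᵐ[μ] 0) :
    ∀ᵐ x ∂μ, lamj x * (starRingEnd ℂ) (lamk x) ≠ 1 := by
  have hf_int : Integrable (fun x => φj x * (starRingEnd ℂ) (φk x)) μ := by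
    obtain ⟨Cj, hCj⟩ := hφjbdd
    obtain ⟨Ck, hCk⟩ := hφkbdd
    refine .of_bound (by fun_prop) (Cj * Ck) (.of_forall fun x => ?_)
    rw [norm_mul, Complex.norm_conj]
    exact mul_le_mul (hCj x) (hCk x) (norm_nonneg _) ((norm_nonneg _).trans (hCj x))
  have h_inv : ∀ᵐ x ∂μ, lamj (T x) * (starRingEnd ℂ) (lamk (T x)) =
      lamj x * (starRingEnd ℂ) (lamk x) := by
    filter_upwards [hlamjinv, hlamkinv] with x hj hk
    rw [hj, hk]
  have h_eig : ∀ᵐ x ∂μ, φj (T x) * (starRingEnd ℂ) (φk (T x)) =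
      lamj x * (starRingEnd ℂ) (lamk x) * (φj x * (starRingEnd ℂ) (φk x)) := by
    filter_upwards [heigj, heigk] with x hj hk
    rw [hj, hk, map_mul]
    ring
  filter_upwards [hT.quasiMeasurePreserving.ae_eq_zero_of_eigenvalue_eq_one hf_int (by fun_prop)
    h_inv h_eig horth, hzeroj, hzerok] with x hx hj hk hx1
  rcases mul_eq_zero.1 (hx hx1) with hφj0 | hφk0
  · simp [hj hφj0] at hx1
  · simp [hk (by simpa using hφk0)] at hx1

/-- If `φ_j, φ_k` are eigenfunctions of an invertible measure-preserving system `(X, μ, T)` with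
`T`-invariant eigenvalues `lamj, lamk`, which are relatively orthonormal over the invariant
σ-algebra `I(T)` (i.e. `E(φ_j conj(φ_k) | I(T)) = 0` a.e. and `E(|φ_j|² | I(T))`,
`E(|φ_k|² | I(T))` take only the values `0` and `1` a.e.), then for μ-a.e. `x` we have
`lamj x · conj (lamk x) ≠ 1`. -/
theorem eigenvalues_ae_distinct {X : Type*} [MeasurableSpace X] (μ : Measure X)
    [IsProbabilityMeasure μ] (T S : X → X) (hT : MeasurePreserving T μ μ) (hS : Measurable S)
    (hTS : ∀ x, S (T x) = x) (hST : ∀ x, T (S x) = x)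
    (φj φk lamj lamk : X → ℂ)
    (hφjm : Measurable φj) (hφkm : Measurable φk)
    (hlamjm : Measurable lamj) (hlamkm : Measurable lamk)
    (hφjbdd : ∃ C, ∀ x, ‖φj x‖ ≤ C) (hφkbdd : ∃ C, ∀ x, ‖φk x‖ ≤ C)
    -- `φj` is an eigenfunction with `T`-invariant eigenvalue `lamj`:
    (h01j : ∀ᵐ x ∂μ, ‖φj x‖ = 0 ∨ ‖φj x‖ = 1)
    (hzeroj : ∀ᵐ x ∂μ, φj x = 0 → lamj x = 0)
    (hlamjinv : ∀ᵐ x ∂μ, lamj (T x) = lamj x)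
    (heigj : ∀ᵐ x ∂μ, φj (T x) = lamj x * φj x)
    -- `φk` is an eigenfunction with `T`-invariant eigenvalue `lamk`:
    (h01k : ∀ᵐ x ∂μ, ‖φk x‖ = 0 ∨ ‖φk x‖ = 1)
    (hzerok : ∀ᵐ x ∂μ, φk x = 0 → lamk x = 0)
    (hlamkinv : ∀ᵐ x ∂μ, lamk (T x) = lamk x)
    (heigk : ∀ᵐ x ∂μ, φk (T x) = lamk x * φk x)
    -- relative orthonormality over the invariant σ-algebra:
    (horth : MeasureTheory.condExp (invSigma T) μ (fun x => φj x * (starRingEnd ℂ) (φk x)) =ᵐ[μ] 0)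
    (hsqj : ∀ᵐ x ∂μ, MeasureTheory.condExp (invSigma T) μ (fun y => ‖φj y‖ ^ 2) x = 0 ∨
        MeasureTheory.condExp (invSigma T) μ (fun y => ‖φj y‖ ^ 2) x = 1)
    (hsqk : ∀ᵐ x ∂μ, MeasureTheory.condExp (invSigma T) μ (fun y => ‖φk y‖ ^ 2) x = 0 ∨
        MeasureTheory.condExp (invSigma T) μ (fun y => ‖φk y‖ ^ 2) x = 1) :
    ∀ᵐ x ∂μ, lamj x * (starRingEnd ℂ) (lamk x) ≠ 1 :=
  eigenvalues_ae_distinct_general μ T hT φj φk lamj lamk hφjm hφkm hlamjm hlamkm hφjbdd hφkbdd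
    hzeroj hlamjinv heigj hzerok hlamkinv heigk horth
end

section
/- Let (X, μ, T) be a probability measure-preserving system with ergodic decomposition μ = ∫ μ_x dμ(x), and let (φ_j)_{j∈ℕ} be a relative orthonormal system in L²(μ) with respect to I(T). Then for every f ∈ L²(μ) and μ-a.e. x, the series Pf := Σ_j f_j φ_j (with f_j := E_μ(f · conj(φ_j) | I(T))) converges in L²(μ_x), and ‖Pf‖²_{L²(μ_x)} = Σ_j |f_j(x)|² and ‖f‖²_{L²(μ_x)} = ‖Pf‖²_{L²(μ_x)} + ‖f − Pf‖²_{L²(μ_x)}. -/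
/-!
Through the ergodic decomposition, the relative conditions on `(φ_j)` become, for `μ`-a.e. `x`,
honest ones in `L²(μ_x)`: `∫ |φ_j|² dμ_x ∈ {0, 1}`, `∫ φ_j conj(φ_k) dμ_x = 0` for `j ≠ k`, and
`f, φ_j ∈ L²(μ_x)` (by monotone convergence along the truncations of `|f|²`). Discarding the zero
vectors leaves an orthonormal family of `L²(μ_x)`, so by Bessel's inequality `∑ ⟪φ_j, f⟫ φ_j`
converges to some `p`. Then `f - p` is orthogonal to every `φ_j`, hence to `p`: the two
identities are Parseval's identity for `p` and Pythagoras for `f = p + (f - p)`.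
-/

open MeasureTheory Filter

open scoped InnerProductSpace ComplexConjugate Topology

section
variable {𝕜 E ι : Type*} [RCLike 𝕜] [NormedAddCommGroup E] [InnerProductSpace 𝕜 E]
  {e : ι → E} (he : ∀ i, e i = 0 ∨ ‖e i‖ = 1) (horth : Pairwise fun i j => ⟪e i, e j⟫_𝕜 = 0)
include he

theorem inner_mul_inner_self_of_eq_zero_or_norm_eq_one (x : E) (i : ι) :
    ⟪e i, x⟫_𝕜 * ⟪e i, e i⟫_𝕜 = ⟪e i, x⟫_𝕜 := by
  rcases he i with h | h
  · simp [h]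
  · simp [inner_self_eq_norm_sq_to_K, h]

include horth

theorem summable_inner_smul_of_eq_zero_or_norm_eq_one [CompleteSpace E] (x : E) :
    Summable fun i => ⟪e i, x⟫_𝕜 • e i := by
  set S := Function.support fun i => ⟪e i, x⟫_𝕜 • e i
  have hv : Orthonormal 𝕜 fun i : S => e i := by
    refine ⟨fun i => (he i).resolve_left fun h => i.2 (by simp [h]), fun i j hij => ?_⟩
    exact horth (Subtype.coe_ne_coe.2 hij)
  rw [← Set.indicator_support (f := fun i => ⟪e i, x⟫_𝕜 • e i),
    ← summable_subtype_iff_indicator]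
  exact (hv.orthogonalFamily.summable_iff_norm_sq_summable _).2
    (hv.inner_products_summable x)

variable {x p : E} (hp : HasSum (fun i => ⟪e i, x⟫_𝕜 • e i) p)
include hp

theorem inner_eq_inner_of_hasSum_inner_smul (j : ι) : ⟪e j, p⟫_𝕜 = ⟪e j, x⟫_𝕜 := by
  refine (hp.mapL (innerSL 𝕜 (e j))).unique ?_
  convert hasSum_single j fun i hij => ?_ using 1
  · simpa [inner_smul_right, mul_comm] using
      (inner_mul_inner_self_of_eq_zero_or_norm_eq_one he x j).symm
  · simp [horth hij.symm]

theorem inner_sub_eq_zero_of_hasSum_inner_smul (i : ι) : ⟪x - p, e i⟫_𝕜 = 0 := by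
  rw [← inner_conj_symm, inner_sub_right, inner_eq_inner_of_hasSum_inner_smul he horth hp,
    sub_self, map_zero]

theorem hasSum_norm_sq_inner_of_hasSum_inner_smul :
    HasSum (fun i => ‖⟪e i, x⟫_𝕜‖ ^ 2) (‖p‖ ^ 2) := by
  have h := hp.mapL (innerSL 𝕜 p)
  have hterm : ∀ i, innerSL 𝕜 p (⟪e i, x⟫_𝕜 • e i) = ((‖⟪e i, x⟫_𝕜‖ ^ 2 : ℝ) : 𝕜) := fun i => by
    rw [innerSL_apply_apply, inner_smul_right, ← inner_conj_symm p,
      inner_eq_inner_of_hasSum_inner_smul he horth hp, RCLike.mul_conj, RCLike.ofReal_pow]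
  simp only [hterm, innerSL_apply_apply, inner_self_eq_norm_sq_to_K] at h
  exact_mod_cast h

theorem inner_sub_self_eq_zero_of_hasSum_inner_smul : ⟪x - p, p⟫_𝕜 = 0 := by
  refine (hp.mapL (innerSL 𝕜 (x - p))).unique ?_
  simp only [innerSL_apply_apply, inner_smul_right,
    inner_sub_eq_zero_of_hasSum_inner_smul he horth hp, mul_zero]
  exact hasSum_zero

theorem norm_sq_eq_add_norm_sq_sub_of_hasSum_inner_smul : ‖x‖ ^ 2 = ‖p‖ ^ 2 + ‖x - p‖ ^ 2 := by
  have h := norm_add_sq_eq_norm_sq_add_norm_sq_of_inner_eq_zero (x - p) p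
    (inner_sub_self_eq_zero_of_hasSum_inner_smul he horth hp)
  rw [sub_add_cancel] at h
  rw [sq, sq, sq, h, add_comm]

end

section
variable {X : Type*} {m m₀ : MeasurableSpace X} {μ : Measure X} {ν : X → Measure X}

theorem condExp_real_ae_eq_integral
    (hν : ∀ g : X → ℂ, Integrable g μ → μ[g|m] =ᵐ[μ] fun x => ∫ y, g y ∂ν x)
    {g : X → ℝ} (hg : Integrable g μ) : μ[g|m] =ᵐ[μ] fun x => ∫ y, g y ∂ν x := by
  filter_upwards [hν _ hg.ofReal, Complex.ofRealCLM.comp_condExp_comm (m := m) hg] with x hx hcomm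
  have h : ((μ[g|m] x : ℝ) : ℂ) = ((∫ y, g y ∂ν x : ℝ) : ℂ) :=
    calc ((μ[g|m] x : ℝ) : ℂ) = μ[fun y => (g y : ℂ)|m] x := hcomm
      _ = ∫ y, (g y : ℂ) ∂ν x := hx
      _ = ((∫ y, g y ∂ν x : ℝ) : ℂ) := integral_complex_ofReal
  exact_mod_cast h

theorem ae_integrable_of_condExp_ae_eq_integral [∀ x, IsFiniteMeasure (ν x)]
    (hν : ∀ g : X → ℝ, Integrable g μ → μ[g|m] =ᵐ[μ] fun x => ∫ y, g y ∂ν x)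
    {g : X → ℝ} (hgm : Measurable g) (hg0 : 0 ≤ g) (hg : Integrable g μ) :
    ∀ᵐ x ∂μ, Integrable g (ν x) := by
  -- `∫ g ∂ν x` may be a junk value; the bounded truncations `min g n` have honest integrals.
  set g' : ℕ → X → ℝ := fun n y => min (g y) n
  have hg'm : ∀ n, Measurable (g' n) := fun n => hgm.min measurable_const
  have hg'0 : ∀ n y, 0 ≤ g' n y := fun n y => le_min (hg0 y) n.cast_nonneg
  have hg'_int : ∀ n, Integrable (g' n) μ := fun n =>
    hg.mono (hg'm n).aestronglyMeasurable (ae_of_all _ fun y => by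
      simp only [Real.norm_eq_abs, abs_of_nonneg (hg'0 n y), abs_of_nonneg (hg0 y)]
      exact min_le_left _ _)
  have hbound : ∀ᵐ x ∂μ, ∀ n, ∫ y, g' n y ∂ν x ≤ μ[g|m] x := ae_all_iff.2 fun n => by
    filter_upwards [hν _ (hg'_int n), condExp_mono (m := m) (hg'_int n) hg
      (ae_of_all _ fun y => min_le_left _ _)] with x hx hmono
    exact hx ▸ hmono
  filter_upwards [hbound] with x hx
  have hg'_intx : ∀ n, Integrable (g' n) (ν x) := fun n =>
    (integrable_const (n : ℝ)).mono (hg'm n).aestronglyMeasurable (ae_of_all _ fun y => by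
      simp only [Real.norm_eq_abs, abs_of_nonneg (hg'0 n y), Nat.abs_cast]
      exact min_le_right _ _)
  have hlim : Tendsto (fun n => ∫⁻ y, ENNReal.ofReal (g' n y) ∂ν x) atTop
      (𝓝 (∫⁻ y, ENNReal.ofReal (g y) ∂ν x)) := by
    refine lintegral_tendsto_of_tendsto_of_monotone (fun n => (hg'm n).ennreal_ofReal.aemeasurable)
      (ae_of_all _ fun y n k hnk => ENNReal.ofReal_le_ofReal (min_le_min_left _ (by gcongr)))
      (ae_of_all _ fun y => (ENNReal.continuous_ofReal.tendsto _).comp ?_)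
    exact tendsto_atTop_of_eventually_const (i₀ := ⌈g y⌉₊) fun n hn =>
      min_eq_left (Nat.ceil_le.1 hn)
  have hlintegral : ∫⁻ y, ENNReal.ofReal (g y) ∂ν x ≤ ENNReal.ofReal (μ[g|m] x) :=
    le_of_tendsto' hlim fun n => by
      rw [← ofReal_integral_eq_lintegral_ofReal (hg'_intx n) (ae_of_all _ (hg'0 n))]
      exact ENNReal.ofReal_le_ofReal (hx n)
  exact ⟨hgm.aestronglyMeasurable, (hasFiniteIntegral_iff_ofReal (ae_of_all _ hg0)).2
    (hlintegral.trans_lt ENNReal.ofReal_lt_top)⟩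

theorem ae_memLp_two_of_condExp_ae_eq_integral [∀ x, IsFiniteMeasure (ν x)]
    (hν : ∀ g : X → ℝ, Integrable g μ → μ[g|m] =ᵐ[μ] fun x => ∫ y, g y ∂ν x)
    {f : X → ℂ} (hfm : Measurable f) (hf : MemLp f 2 μ) : ∀ᵐ x ∂μ, MemLp f 2 (ν x) := by
  filter_upwards [ae_integrable_of_condExp_ae_eq_integral hν (hfm.norm.pow_const 2)
    (fun y => sq_nonneg _) (hf.integrable_norm_pow two_ne_zero)] with x hx
  exact (memLp_two_iff_integrable_sq_norm hfm.aestronglyMeasurable).2 hx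

end

section
variable {X : Type*} [MeasurableSpace X] {ν : Measure X}

theorem MeasureTheory.Lp.integral_norm_sq_eq_norm_sq {E : Type*} [NormedAddCommGroup E]
    [InnerProductSpace ℝ E] (H : Lp E 2 ν) {g : X → E} (hg : H =ᵐ[ν] g) :
    ∫ y, ‖g y‖ ^ 2 ∂ν = ‖H‖ ^ 2 := by
  rw [← real_inner_self_eq_norm_sq, L2.inner_def]
  refine integral_congr_ae ?_
  filter_upwards [hg] with y hy
  rw [hy, real_inner_self_eq_norm_sq]

theorem MeasureTheory.MemLp.inner_toLp_toLp {𝕜 E : Type*} [RCLike 𝕜] [NormedAddCommGroup E]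
    [InnerProductSpace 𝕜 E] {f g : X → E} (hf : MemLp f 2 ν) (hg : MemLp g 2 ν) :
    ⟪hf.toLp f, hg.toLp g⟫_𝕜 = ∫ y, ⟪f y, g y⟫_𝕜 ∂ν := by
  rw [L2.inner_def]
  refine integral_congr_ae ?_
  filter_upwards [hf.coeFn_toLp, hg.coeFn_toLp] with y hfy hgy
  rw [hfy, hgy]

theorem exists_tendsto_partialSum_of_orthonormal_or_zero {φ : ℕ → X → ℂ}
    (hφ : ∀ j, MemLp (φ j) 2 ν)
    (hnorm : ∀ j, ∫ y, ‖φ j y‖ ^ 2 ∂ν = 0 ∨ ∫ y, ‖φ j y‖ ^ 2 ∂ν = 1)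
    (horth : ∀ j k, j ≠ k → ∫ y, φ j y * conj (φ k y) ∂ν = 0)
    {f : X → ℂ} (hf : MemLp f 2 ν) :
    ∃ P : X → ℂ,
      Tendsto (fun J : ℕ => ∫ y,
          ‖(∑ j ∈ Finset.range J, (∫ z, f z * conj (φ j z) ∂ν) * φ j y) - P y‖ ^ 2 ∂ν)
        atTop (𝓝 0) ∧
      ∫ y, ‖P y‖ ^ 2 ∂ν = ∑' j, ‖∫ z, f z * conj (φ j z) ∂ν‖ ^ 2 ∧
      ∫ y, ‖f y‖ ^ 2 ∂ν = ∫ y, ‖P y‖ ^ 2 ∂ν + ∫ y, ‖f y - P y‖ ^ 2 ∂ν := by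
  set c : ℕ → ℂ := fun j => ∫ z, f z * conj (φ j z) ∂ν
  set e : ℕ → Lp ℂ 2 ν := fun j => (hφ j).toLp
  have hinner : ∀ j {g : X → ℂ} (hg : MemLp g 2 ν),
      ⟪e j, hg.toLp g⟫_ℂ = ∫ y, g y * conj (φ j y) ∂ν := fun j g hg => by
    simp only [e, MemLp.inner_toLp_toLp, RCLike.inner_apply]
  have he : ∀ j, e j = 0 ∨ ‖e j‖ = 1 := fun j => by
    rw [← norm_eq_zero, ← sq_eq_zero_iff, ← pow_eq_one_iff_of_nonneg (norm_nonneg _) two_ne_zero,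
      ← Lp.integral_norm_sq_eq_norm_sq _ (hφ j).coeFn_toLp]
    exact hnorm j
  have hortho : Pairwise fun j k => ⟪e j, e k⟫_ℂ = 0 := fun j k hjk => by
    change ⟪e j, (hφ k).toLp⟫_ℂ = 0
    rw [hinner j (hφ k), horth k j hjk.symm]
  obtain ⟨p, hp⟩ := summable_inner_smul_of_eq_zero_or_norm_eq_one he hortho hf.toLp
  have hp' : HasSum (fun j => c j • e j) p := by simpa only [hinner] using hp
  set S : ℕ → Lp ℂ 2 ν := fun J => ∑ j ∈ Finset.range J, c j • e j
  have hS : ∀ J, ⇑(S J - p) =ᵐ[ν] fun y => (∑ j ∈ Finset.range J, c j * φ j y) - p y := by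
    intro J
    filter_upwards [Lp.coeFn_sub (S J) p,
      Lp.coeFn_fun_finsetSum (Finset.range J) fun j => c j • e j,
      ae_all_iff.2 fun j => Lp.coeFn_smul (c j) (e j),
      ae_all_iff.2 fun j => (hφ j).coeFn_toLp] with y hsub hsum hsmul hφy
    simp only [hsub, Pi.sub_apply, S, hsum, hsmul, Pi.smul_apply, e, hφy, smul_eq_mul]
  refine ⟨p, ?_, ?_, ?_⟩
  · have h := ((hp'.tendsto_sum_nat.sub_const p).norm.pow 2).congr fun J =>
      (Lp.integral_norm_sq_eq_norm_sq _ (hS J)).symm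
    rwa [sub_self, norm_zero, zero_pow two_ne_zero] at h
  · rw [Lp.integral_norm_sq_eq_norm_sq p (ae_eq_refl _)]
    simpa only [hinner] using (hasSum_norm_sq_inner_of_hasSum_inner_smul he hortho hp).tsum_eq.symm
  · rw [Lp.integral_norm_sq_eq_norm_sq _ hf.coeFn_toLp,
      Lp.integral_norm_sq_eq_norm_sq p (ae_eq_refl _),
      Lp.integral_norm_sq_eq_norm_sq (hf.toLp f - p) (g := fun y => f y - p y)
        ((Lp.coeFn_sub _ p).trans (hf.coeFn_toLp.sub (ae_eq_refl _)))]
    exact norm_sq_eq_add_norm_sq_sub_of_hasSum_inner_smul he hortho hp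

end

theorem relative_orthonormal_bessel_general {X : Type*} [MeasurableSpace X] (μ : Measure X) (T : X → X)
    (μx : X → Measure X) (hprob : ∀ x, IsProbabilityMeasure (μx x))
    (hdecomp : ∀ g : X → ℂ, Integrable g μ →
      (MeasureTheory.condExp (invSigma T) μ g) =ᵐ[μ] fun x => ∫ y, g y ∂(μx x))
    (φ : ℕ → X → ℂ) (hφm : ∀ j, Measurable (φ j)) (hφ2 : ∀ j, MemLp (φ j) 2 μ)
    (hsq : ∀ j, ∀ᵐ x ∂μ,
      MeasureTheory.condExp (invSigma T) μ (fun y => ‖φ j y‖ ^ 2) x = 0 ∨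
      MeasureTheory.condExp (invSigma T) μ (fun y => ‖φ j y‖ ^ 2) x = 1)
    (horth : ∀ j k, j ≠ k →
      (MeasureTheory.condExp (invSigma T) μ
        fun y => φ j y * (starRingEnd ℂ) (φ k y)) =ᵐ[μ] 0)
    (f : X → ℂ) (hfm : Measurable f) (hf2 : MemLp f 2 μ) :
    ∃ P : X → X → ℂ, ∀ᵐ x ∂μ,
      Tendsto (fun J : ℕ => ∫ y,
          ‖(∑ j ∈ Finset.range J, (∫ z, f z * (starRingEnd ℂ) (φ j z) ∂(μx x)) * φ j y)
            - P x y‖ ^ 2 ∂(μx x)) atTop (nhds 0) ∧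
      (∫ y, ‖P x y‖ ^ 2 ∂(μx x))
        = ∑' j : ℕ, ‖∫ z, f z * (starRingEnd ℂ) (φ j z) ∂(μx x)‖ ^ 2 ∧
      (∫ y, ‖f y‖ ^ 2 ∂(μx x))
        = (∫ y, ‖P x y‖ ^ 2 ∂(μx x)) + ∫ y, ‖f y - P x y‖ ^ 2 ∂(μx x) := by
  have hℝ : ∀ g : X → ℝ, Integrable g μ →
      μ[g|invSigma T] =ᵐ[μ] fun x => ∫ y, g y ∂(μx x) := fun g hg =>
    condExp_real_ae_eq_integral hdecomp hg
  have hf : ∀ᵐ x ∂μ, MemLp f 2 (μx x) := ae_memLp_two_of_condExp_ae_eq_integral hℝ hfm hf2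
  have hφ : ∀ᵐ x ∂μ, ∀ j, MemLp (φ j) 2 (μx x) :=
    ae_all_iff.2 fun j => ae_memLp_two_of_condExp_ae_eq_integral hℝ (hφm j) (hφ2 j)
  have hnorm : ∀ᵐ x ∂μ, ∀ j, ∫ y, ‖φ j y‖ ^ 2 ∂(μx x) = 0 ∨ ∫ y, ‖φ j y‖ ^ 2 ∂(μx x) = 1 :=
    ae_all_iff.2 fun j => by
      filter_upwards [hℝ _ ((hφ2 j).integrable_norm_pow two_ne_zero), hsq j] with x hx hsqx
      rwa [← hx]
  have hortho : ∀ᵐ x ∂μ, ∀ j k, j ≠ k → ∫ y, φ j y * conj (φ k y) ∂(μx x) = 0 :=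
    ae_all_iff.2 fun j => ae_all_iff.2 fun k => ae_all_iff.2 fun hjk => by
      filter_upwards [hdecomp (fun y => φ j y * conj (φ k y)) ((hφ2 j).integrable_mul (hφ2 k).star),
        horth j k hjk] with x hx h0
      rw [← hx, h0, Pi.zero_apply]
  obtain ⟨P, hP⟩ := Filter.skolem.1 (show ∀ᵐ x ∂μ, ∃ g : X → ℂ, _ by
    filter_upwards [hf, hφ, hnorm, hortho] with x hfx hφx hnormx horthox
    exact exists_tendsto_partialSum_of_orthonormal_or_zero hφx hnormx horthox hfx)
  exact ⟨P, hP⟩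

/-- Relative Bessel/Pythagoras identities: if `(φ_j)` is a relative orthonormal system in
`L²(μ)` with respect to the invariant σ-algebra `I(T)` and `μ = ∫ μ_x dμ(x)` is the ergodic
decomposition (characterized by `E_μ(g | I(T))(x) = ∫ g dμ_x` a.e.), then for every
`f ∈ L²(μ)` and μ-a.e. `x`, the series `Pf = ∑_j f_j(x) φ_j` (with
`f_j(x) = ∫ f conj(φ_j) dμ_x`) converges in `L²(μ_x)`, and
`‖Pf‖²_{L²(μ_x)} = ∑_j |f_j(x)|²` and
`‖f‖²_{L²(μ_x)} = ‖Pf‖²_{L²(μ_x)} + ‖f − Pf‖²_{L²(μ_x)}`. -/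
theorem relative_orthonormal_bessel {X : Type*} [MeasurableSpace X] (μ : Measure X)
    [IsProbabilityMeasure μ] (T : X → X) (hT : MeasurePreserving T μ μ)
    (μx : X → Measure X) (hprob : ∀ x, IsProbabilityMeasure (μx x))
    (hdecomp : ∀ g : X → ℂ, Integrable g μ →
      (MeasureTheory.condExp (invSigma T) μ g) =ᵐ[μ] fun x => ∫ y, g y ∂(μx x))
    (φ : ℕ → X → ℂ) (hφm : ∀ j, Measurable (φ j)) (hφ2 : ∀ j, MemLp (φ j) 2 μ)
    (hsq : ∀ j, ∀ᵐ x ∂μ,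
      MeasureTheory.condExp (invSigma T) μ (fun y => ‖φ j y‖ ^ 2) x = 0 ∨
      MeasureTheory.condExp (invSigma T) μ (fun y => ‖φ j y‖ ^ 2) x = 1)
    (horth : ∀ j k, j ≠ k →
      (MeasureTheory.condExp (invSigma T) μ
        fun y => φ j y * (starRingEnd ℂ) (φ k y)) =ᵐ[μ] 0)
    (f : X → ℂ) (hfm : Measurable f) (hf2 : MemLp f 2 μ) :
    ∃ P : X → X → ℂ, ∀ᵐ x ∂μ,
      Tendsto (fun J : ℕ => ∫ y,
          ‖(∑ j ∈ Finset.range J, (∫ z, f z * (starRingEnd ℂ) (φ j z) ∂(μx x)) * φ j y)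
            - P x y‖ ^ 2 ∂(μx x)) atTop (nhds 0) ∧
      (∫ y, ‖P x y‖ ^ 2 ∂(μx x))
        = ∑' j : ℕ, ‖∫ z, f z * (starRingEnd ℂ) (φ j z) ∂(μx x)‖ ^ 2 ∧
      (∫ y, ‖f y‖ ^ 2 ∂(μx x))
        = (∫ y, ‖P x y‖ ^ 2 ∂(μx x)) + ∫ y, ‖f y - P x y‖ ^ 2 ∂(μx x) :=
  relative_orthonormal_bessel_general μ T μx hprob hdecomp φ hφm hφ2 hsq horth f hfm hf2
end

section
/- Let (Y, T₁, ..., T_d) be a distal topological dynamical system on a compact metric space, i.e., for all y ≠ y' in Y, inf over n⃗ ∈ ℤ^d of dist(T_{n⃗} y, T_{n⃗} y') > 0. Then for every y₁ ∈ Y and every sequence (m⃗_i) in ℕ^d there exist y₀ ∈ Y and a subsequence (m⃗'_i) such that T_{m⃗'_i} y₀ converges to y₁. -/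
open Filter

/-- The product `T₁^{n₁} ⋯ T_d^{n_d}` of commuting permutations. -/
noncomputable def vecPow {Y : Type*} {d : ℕ} (T : Fin d → Equiv.Perm Y) (n : Fin d → ℤ) :
    Equiv.Perm Y :=
  (List.ofFn fun i => T i ^ n i).prod

/-!
The closure `E` of `{T_n⃗}` in `Y → Y` (the Ellis semigroup) is a compact semigroup under
composition, and distality makes all of its elements injective. Take a cluster point `p ∈ E`
of the maps `T_{m⃗_i}`. An idempotent `u = q ∘ p` of the compact semigroup `E ∘ p` is injective,
hence `u = id`; then `p ∘ q ∘ p = p` and injectivity of `p` give `p ∘ q = id`. So `p` is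
onto, `y₀ := q y₁` satisfies `p y₀ = y₁`, and a subsequence of `T_{m⃗_i} y₀` tends to `y₁`.
-/

section vecPow

variable {Y : Type*} {d : ℕ} {T : Fin d → Equiv.Perm Y}

lemma vecPow_eq_noncommProd (hcomm : ∀ i j, Commute (T i) (T j)) (n : Fin d → ℤ) :
    vecPow T n = Finset.univ.noncommProd (fun i => T i ^ n i)
      (fun i _ j _ _ => (hcomm i j).zpow_zpow _ _) := by
  simp only [vecPow, Finset.noncommProd, Fin.univ_def, Multiset.map_coe,
    Multiset.noncommProd_coe, List.ofFn_eq_map]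

lemma vecPow_add (hcomm : ∀ i j, Commute (T i) (T j)) (n n' : Fin d → ℤ) :
    vecPow T (n + n') = vecPow T n * vecPow T n' := by
  simp only [vecPow_eq_noncommProd hcomm, Pi.add_apply, zpow_add]
  exact Finset.noncommProd_mul_distrib (fun i => T i ^ n i) (fun i => T i ^ n' i) _ _
    fun i _ j _ _ => (hcomm i j).zpow_zpow _ _

def continuousPermSubgroup (Y : Type*) [TopologicalSpace Y] : Subgroup (Equiv.Perm Y) where
  carrier := {f | Continuous f ∧ Continuous f.symm}
  one_mem' := ⟨continuous_id, continuous_id⟩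
  mul_mem' := fun ⟨hf, hf'⟩ ⟨hg, hg'⟩ => ⟨hf.comp hg, hg'.comp hf'⟩
  inv_mem' := fun ⟨hf, hf'⟩ => ⟨hf', hf⟩

lemma continuous_vecPow [TopologicalSpace Y] (hTcont : ∀ i, Continuous (T i))
    (hTsymm : ∀ i, Continuous (T i).symm) (n : Fin d → ℤ) : Continuous (vecPow T n) := by
  have : vecPow T n ∈ continuousPermSubgroup Y := list_prod_mem fun _ hf => by
    obtain ⟨i, rfl⟩ := List.mem_ofFn.mp hf
    exact zpow_mem (show T i ∈ continuousPermSubgroup Y from ⟨hTcont i, hTsymm i⟩) _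
  exact this.1

end vecPow

section EllisSemigroup

variable {Y : Type*} [TopologicalSpace Y]

lemma comp_mem_closure {S : Set (Y → Y)} (hcont : ∀ f ∈ S, Continuous f)
    (hS : ∀ f ∈ S, ∀ g ∈ S, f ∘ g ∈ S) {f g : Y → Y} (hf : f ∈ closure S)
    (hg : g ∈ closure S) : f ∘ g ∈ closure S := by
  have hleft : ∀ f ∈ S, f ∘ g ∈ closure S := fun f hf =>
    map_mem_closure (continuous_pi fun y => (hcont f hf).comp (continuous_apply y)) hg
      (hS f hf)
  simpa only [closure_closure] using
    map_mem_closure (continuous_pi fun y => continuous_apply (g y) :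
      Continuous fun h : Y → Y => h ∘ g) hf hleft

lemma exists_mem_leftInverse [CompactSpace Y] [T2Space Y] {E : Set (Y → Y)}
    (hE : IsClosed E) (hEcomp : ∀ f ∈ E, ∀ g ∈ E, f ∘ g ∈ E)
    (hinj : ∀ f ∈ E, Function.Injective f) {p : Y → Y} (hp : p ∈ E) :
    ∃ q ∈ E, Function.LeftInverse q p := by
  let _ : Semigroup (Y → Y) := { mul := (· ∘ ·), mul_assoc := fun _ _ _ => rfl }
  have hmul : ∀ r : Y → Y, Continuous (· * r) :=
    fun r => continuous_pi fun y => continuous_apply (r y)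
  obtain ⟨_, ⟨q, hq, rfl⟩, hidem⟩ := exists_idempotent_in_compact_subsemigroup hmul
    ((· ∘ p) '' E) ⟨p ∘ p, p, hp, rfl⟩ (hE.isCompact.image (hmul p)) (by
      rintro _ ⟨f, hf, rfl⟩ _ ⟨g, hg, rfl⟩
      exact ⟨f ∘ p ∘ g, hEcomp f hf _ (hEcomp p hp g hg), rfl⟩)
  exact ⟨q, hq, fun y => hinj _ (hEcomp q hq p hp) (congrFun hidem y)⟩

lemma surjective_of_mem [CompactSpace Y] [T2Space Y] {E : Set (Y → Y)}
    (hE : IsClosed E) (hEcomp : ∀ f ∈ E, ∀ g ∈ E, f ∘ g ∈ E)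
    (hinj : ∀ f ∈ E, Function.Injective f) {p : Y → Y} (hp : p ∈ E) :
    Function.Surjective p := by
  obtain ⟨q, hq, hqp⟩ := exists_mem_leftInverse hE hEcomp hinj hp
  exact fun y => ⟨q y, hinj q hq (hqp (q y))⟩

lemma injective_of_mem_closure {Y : Type*} [MetricSpace Y] {S : Set (Y → Y)}
    (hS : ∀ y y', y ≠ y' → ∃ δ > 0, ∀ f ∈ S, δ ≤ dist (f y) (f y')) {p : Y → Y}
    (hp : p ∈ closure S) : Function.Injective p := by
  intro y y' hpy
  by_contra hne
  obtain ⟨δ, hδ, hδS⟩ := hS y y' hne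
  have hclosed : IsClosed {f : Y → Y | δ ≤ dist (f y) (f y')} :=
    isClosed_le continuous_const ((continuous_apply y).dist (continuous_apply y'))
  have : δ ≤ dist (p y) (p y') := closure_minimal hδS hclosed hp
  rw [hpy, dist_self] at this
  exact hδ.not_ge this

end EllisSemigroup

/-- For a distal topological dynamical system `(Y, T₁, …, T_d)` on a compact metric space
(commuting homeomorphisms, with `inf_{n⃗ ∈ ℤ^d} dist(T_{n⃗}y, T_{n⃗}y') > 0` whenever
`y ≠ y'`), every point `y₁` is a limit of `T_{m⃗'_i} y₀` for some `y₀` and some subsequence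
`(m⃗'_i)` of any given sequence `(m⃗_i)` in `ℕ^d`. -/
theorem distal_reachability (Y : Type*) [MetricSpace Y] [CompactSpace Y] (d : ℕ)
    (T : Fin d → Equiv.Perm Y)
    (hTcont : ∀ i, Continuous (T i)) (hTsymm : ∀ i, Continuous (T i).symm)
    (hcomm : ∀ i j, Commute (T i) (T j))
    (hdistal : ∀ y y' : Y, y ≠ y' → ∃ δ > 0, ∀ n : Fin d → ℤ,
      δ ≤ dist (vecPow T n y) (vecPow T n y'))
    (y₁ : Y) (m : ℕ → (Fin d → ℕ)) :
    ∃ y₀ : Y, ∃ s : ℕ → ℕ, StrictMono s ∧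
      Tendsto (fun i => vecPow T (fun k => ((m (s i) k : ℤ))) y₀) atTop (nhds y₁) := by
  set G : Set (Y → Y) := Set.range fun n => ⇑(vecPow T n)
  have hGcomp : ∀ f ∈ G, ∀ g ∈ G, f ∘ g ∈ G := by
    rintro _ ⟨n, rfl⟩ _ ⟨n', rfl⟩
    exact ⟨n + n', congrArg DFunLike.coe (vecPow_add hcomm n n')⟩
  have hGcont : ∀ f ∈ G, Continuous f := by
    rintro _ ⟨n, rfl⟩
    exact continuous_vecPow hTcont hTsymm n
  set a : ℕ → (Y → Y) := fun i => ⇑(vecPow T fun k => (m i k : ℤ))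
  obtain ⟨p, hp⟩ := exists_clusterPt_of_compactSpace (map a atTop)
  have hpG : p ∈ closure G :=
    closure_mono (Set.range_comp_subset_range (fun i k => (m i k : ℤ)) fun n => ⇑(vecPow T n))
      (mem_closure_iff_clusterPt.mpr (hp.mono (le_principal_iff.mpr range_mem_map)))
  obtain ⟨y₀, hy₀⟩ := surjective_of_mem isClosed_closure
    (fun f hf g hg => comp_mem_closure hGcont hGcomp hf hg)
    (fun f hf => injective_of_mem_closure
      (by simpa only [G, Set.forall_mem_range] using hdistal) hf)
    hpG y₁
  have hcl : MapClusterPt y₁ atTop fun i => a i y₀ :=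
    hy₀ ▸ MapClusterPt.continuousAt_comp (continuous_apply y₀).continuousAt hp
  obtain ⟨s, hs, hst⟩ := hcl.tendsto_subseq
  exact ⟨y₀, s, hs, hst⟩
end
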